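/- arXiv:1510.03645 — 10 statements merged into one kernel-verified Lean document; each statement's English description precedes it below -/
import Mathlib

section
/- Let α = (α₁,…,αₙ) ∈ ℂⁿ, Λ_α = {l ∈ ℤⁿ : l·α = 0}, and E_α = {ξ ∈ ℝⁿ : l·ξ ∈ ℤ for all l ∈ Λ_α}. Then E_α is the topological closure of the set ℤⁿ + ℝ·(Re α) + ℝ·(Im α) in ℝⁿ. -/
/-!
Let `G = ℤⁿ + ℝ Re α + ℝ Im α`. The vectors `y ∈ ℝⁿ` with `y · G ⊆ ℤ` are exactly the integer
vectors `l` with `l · α = 0`, so `E_α` is the double dual `G^**` for the pairing `y · ξ ∈ ℤ`, and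
the theorem is the bipolar theorem `closure G = G^**` for subgroups of `ℝⁿ`.

Since `G^*` only sees the closure, it suffices to show `H^** ⊆ H` for a closed subgroup `H`. Let `V`
be the largest subspace contained in `H`. Then `D = H ∩ V^⊥` contains no line, so it is discrete
(a sequence of nonzero points of `D` tending to `0`, rescaled by integers, would fill a whole line),
and `H = V ⊕ D`. The orthogonal projection onto `V^⊥` is self-adjoint and maps `H` into `D`, so it
maps `H^**` into `D^**`. Finally `D^** ⊆ span D` (otherwise a real multiple of the component
orthogonal to `span D` pairs non-integrally with `ξ`), and inside `span D` the discrete group `D`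
is a full lattice, whose double dual is itself by the dual basis.
-/

open Filter Topology
open scoped RealInnerProductSpace

lemma eq_zero_of_forall_mul_eq_intCast {c : ℝ} (h : ∀ t : ℝ, ∃ z : ℤ, t * c = z) : c = 0 := by
  by_contra hc
  obtain ⟨z, hz⟩ := h (2 * c)⁻¹
  have : ((2 * z : ℤ) : ℝ) = 1 := by
    push_cast
    rw [← hz]
    field_simp
  have : 2 * z = 1 := by exact_mod_cast this
  omega

namespace Submodule

section Ring

variable {R M : Type*} [Ring R] [AddCommGroup M] [Module R M]

variable (R) in
def maxSubmodule (N : Submodule ℤ M) : Submodule R M where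
  carrier := {x | ∀ t : R, t • x ∈ N}
  add_mem' ha hb t := by rw [smul_add]; exact N.add_mem (ha t) (hb t)
  zero_mem' t := by rw [smul_zero]; exact N.zero_mem
  smul_mem' c _ hx t := by rw [smul_smul]; exact hx (t * c)

lemma mem_of_mem_maxSubmodule {N : Submodule ℤ M} {x : M} (hx : x ∈ N.maxSubmodule R) : x ∈ N := by
  simpa using hx 1

end Ring

section Normed

variable {E : Type*} [NormedAddCommGroup E] [NormedSpace ℝ E] [ProperSpace E]

lemma exists_ne_zero_mem_maxSubmodule {N : Submodule ℤ E} (hN : IsClosed (N : Set E))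
    {x : ℕ → E} (hxN : ∀ k, x k ∈ N) (hx0 : ∀ k, x k ≠ 0) (hx : Tendsto x atTop (𝓝 0)) :
    ∃ e ≠ 0, e ∈ N.maxSubmodule ℝ := by
  have hnorm k : ‖x k‖ ≠ 0 := norm_ne_zero_iff.mpr (hx0 k)
  have hsphere k : ‖x k‖⁻¹ • x k ∈ Metric.sphere (0 : E) 1 := by
    simp [norm_smul, inv_mul_cancel₀ (hnorm k)]
  obtain ⟨e, he, φ, hφ, hdir⟩ := (isCompact_sphere (0 : E) 1).tendsto_subseq hsphere
  refine ⟨e, ne_zero_of_mem_unit_sphere ⟨e, he⟩, fun t => ?_⟩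
  have hlen : Tendsto (fun k => ‖x (φ k)‖) atTop (𝓝 0) := by
    simpa using (hx.comp hφ.tendsto_atTop).norm
  -- `⌊t / ‖x‖⌋ • x ∈ N` is within `‖x‖` of `t • (x / ‖x‖)`
  set c : ℕ → ℝ := fun k => ⌊t / ‖x (φ k)‖⌋ * ‖x (φ k)‖
  have hc : Tendsto c atTop (𝓝 t) := by
    have hdist k : ‖c k - t‖ ≤ ‖x (φ k)‖ := by
      have hn := hnorm (φ k)
      have h1 := Int.floor_le (t / ‖x (φ k)‖)
      have h2 := Int.lt_floor_add_one (t / ‖x (φ k)‖)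
      rw [Real.norm_eq_abs, abs_le]
      constructor <;> simp only [c] <;> field_simp at h1 h2 ⊢ <;> nlinarith [norm_nonneg (x (φ k))]
    simpa using (squeeze_zero_norm hdist hlen).add_const t
  refine hN.mem_of_tendsto (hc.smul hdir) (Eventually.of_forall fun k => ?_)
  have : c k • (‖x (φ k)‖⁻¹ • x (φ k)) = ⌊t / ‖x (φ k)‖⌋ • x (φ k) := by
    rw [smul_smul, ← Int.cast_smul_eq_zsmul ℝ, mul_assoc, mul_inv_cancel₀ (hnorm (φ k)), mul_one]
  simp only [Function.comp_apply, SetLike.mem_coe, this]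
  exact N.smul_mem _ (hxN (φ k))

lemma discreteTopology_of_maxSubmodule_eq_bot {N : Submodule ℤ E}
    (hN : IsClosed (N : Set E)) (h : N.maxSubmodule ℝ = ⊥) : DiscreteTopology N := by
  rw [discreteTopology_iff_isOpen_singleton_zero, Metric.isOpen_singleton_iff]
  by_contra! hsmall
  choose y hy hy0 using fun k : ℕ => hsmall (1 / (k + 1)) Nat.one_div_pos_of_nat
  have hlim : Tendsto (fun k => (y k : E)) atTop (𝓝 0) := by
    rw [tendsto_zero_iff_norm_tendsto_zero]
    refine squeeze_zero (fun k => norm_nonneg _) (fun k => ?_)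
      tendsto_one_div_add_atTop_nhds_zero_nat
    simpa using (hy k).le
  obtain ⟨e, he0, he⟩ := exists_ne_zero_mem_maxSubmodule hN (fun k => (y k).2)
    (fun k => by simpa using hy0 k) hlim
  exact he0 (by simpa [h] using he)

end Normed

end Submodule

section InnerProduct

variable {E : Type*} [NormedAddCommGroup E] [InnerProductSpace ℝ E]

lemma nondegenerate_innerₗ : LinearMap.BilinForm.Nondegenerate (innerₗ E) :=
  ⟨fun x hx => inner_self_eq_zero.mp (hx x), fun x hx => inner_self_eq_zero.mp (hx x)⟩

namespace Submodule

noncomputable abbrev dualLattice (N : Submodule ℤ E) : Submodule ℤ E :=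
  LinearMap.BilinForm.dualSubmodule (innerₗ E) N

lemma mem_dualLattice {N : Submodule ℤ E} {y : E} :
    y ∈ N.dualLattice ↔ ∀ g ∈ N, ∃ z : ℤ, ⟪y, g⟫ = z := by
  simp [LinearMap.BilinForm.mem_dualSubmodule, mem_one, eq_comm]

lemma le_dualLattice_dualLattice (N : Submodule ℤ E) : N ≤ N.dualLattice.dualLattice :=
  fun g hg => mem_dualLattice.mpr fun y hy => real_inner_comm g y ▸ mem_dualLattice.mp hy g hg

lemma dualLattice_anti {N₁ N₂ : Submodule ℤ E} (h : N₁ ≤ N₂) :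
    N₂.dualLattice ≤ N₁.dualLattice :=
  fun _ hy => mem_dualLattice.mpr fun g hg => mem_dualLattice.mp hy g (h hg)

lemma isClosed_dualLattice (N : Submodule ℤ E) : IsClosed (N.dualLattice : Set E) := by
  have : (N.dualLattice : Set E) = ⋂ g ∈ N, (fun y => ⟪y, g⟫) ⁻¹' Set.range ((↑) : ℤ → ℝ) := by
    ext y
    simp [mem_dualLattice, eq_comm]
  rw [this]
  exact isClosed_biInter fun g _ =>
    Int.isClosedEmbedding_coe_real.isClosed_range.preimage (continuous_id.inner continuous_const)

end Submodule

variable [FiniteDimensional ℝ E]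

theorem IsZLattice.dualLattice_dualLattice (L : Submodule ℤ E) [DiscreteTopology L]
    [IsZLattice ℝ L] : L.dualLattice.dualLattice = L := by
  have := ZLattice.module_free ℝ L
  have := ZLattice.module_finite ℝ L
  rw [← (Module.Free.chooseBasis ℤ L).ofZLatticeBasis_span ℝ]
  exact LinearMap.BilinForm.dualSubmodule_dualSubmodule_of_basis _ nondegenerate_innerₗ
    (LinearMap.BilinForm.isSymm_iff.mpr isSymm_inner) _

namespace Submodule

lemma mem_span_of_mem_dualLattice_dualLattice {N : Submodule ℤ E} {ξ : E}
    (hξ : ξ ∈ N.dualLattice.dualLattice) : ξ ∈ span ℝ (N : Set E) := by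
  set K := span ℝ (N : Set E)
  set u := ξ - K.starProjection ξ
  have hu : u ∈ Kᗮ := sub_starProjection_mem_orthogonal ξ
  have hdual (t : ℝ) : t • u ∈ N.dualLattice := by
    refine mem_dualLattice.mpr fun g hg => ⟨0, ?_⟩
    rw [real_inner_smul_left, inner_left_of_mem_orthogonal (subset_span hg) hu]
    simp
  have huξ : ⟪u, ξ⟫ = ⟪u, u⟫ := by
    conv_rhs => rw [inner_sub_right, inner_left_of_mem_orthogonal (K.starProjection_apply_mem ξ) hu]
    rw [sub_zero]
  have hu0 : ⟪u, u⟫ = 0 := eq_zero_of_forall_mul_eq_intCast fun t => by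
    rw [← huξ, ← real_inner_smul_left, real_inner_comm]
    exact mem_dualLattice.mp hξ (t • u) (hdual t)
  rw [sub_eq_zero.mp (inner_self_eq_zero.mp hu0)]
  exact K.starProjection_apply_mem ξ

theorem dualLattice_dualLattice_of_discreteTopology (D : Submodule ℤ E)
    [DiscreteTopology D] : D.dualLattice.dualLattice = D := by
  refine le_antisymm (fun ξ hξ => ?_) D.le_dualLattice_dualLattice
  set W := span ℝ (D : Set E)
  have hDW : ∀ d ∈ D, d ∈ W := fun d hd => subset_span hd
  set L : Submodule ℤ W := D.comap (W.subtype.restrictScalars ℤ)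
  have : DiscreteTopology L :=
    DiscreteTopology.preimage_of_continuous_injective (D : Set E) continuous_subtype_val
      Subtype.val_injective
  have : IsZLattice ℝ L := ⟨by
    have hL : W.subtype '' L = D := by
      ext x
      exact ⟨by rintro ⟨y, hy, rfl⟩; exact hy, fun hx => ⟨⟨x, hDW x hx⟩, hx, rfl⟩⟩
    rw [← (map_injective_of_injective W.injective_subtype).eq_iff, map_span, map_top,
      range_subtype, hL]⟩
  have hξL : (⟨ξ, mem_span_of_mem_dualLattice_dualLattice hξ⟩ : W) ∈ L.dualLattice.dualLattice :=
    mem_dualLattice.mpr fun y hy => mem_dualLattice.mp hξ y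
      (mem_dualLattice.mpr fun d hd => mem_dualLattice.mp hy ⟨d, hDW d hd⟩ hd)
  rw [IsZLattice.dualLattice_dualLattice] at hξL
  exact hξL

theorem dualLattice_dualLattice_of_isClosed {H : Submodule ℤ E}
    (hH : IsClosed (H : Set E)) : H.dualLattice.dualLattice = H := by
  refine le_antisymm (fun ξ hξ => ?_) H.le_dualLattice_dualLattice
  set V := H.maxSubmodule ℝ
  set π := Vᗮ.starProjection
  set D := H ⊓ Vᗮ.restrictScalars ℤ
  have hVH : ∀ v ∈ V, v ∈ H := fun v hv => mem_of_mem_maxSubmodule hv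
  have hπD : ∀ x ∈ H, π x ∈ D := fun x hx => by
    refine ⟨?_, Vᗮ.starProjection_apply_mem x⟩
    rw [starProjection_orthogonal_val]
    exact H.sub_mem hx (hVH _ (V.starProjection_apply_mem x))
  have hDmax : D.maxSubmodule ℝ = ⊥ := by
    refine eq_bot_iff.mpr fun e he => ?_
    have heV' : e ∈ Vᗮ := by simpa using (he 1).2
    exact V.inf_orthogonal_eq_bot ▸ (⟨fun t => (he t).1, heV'⟩ : e ∈ V ⊓ Vᗮ)
  have := discreteTopology_of_maxSubmodule_eq_bot (hH.inter V.isClosed_orthogonal) hDmax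
  have hπξ : π ξ ∈ D.dualLattice.dualLattice := mem_dualLattice.mpr fun y hy => by
    rw [inner_starProjection_left_eq_right]
    refine mem_dualLattice.mp hξ (π y) (mem_dualLattice.mpr fun h hh => ?_)
    rw [inner_starProjection_left_eq_right]
    exact mem_dualLattice.mp hy _ (hπD h hh)
  rw [dualLattice_dualLattice_of_discreteTopology] at hπξ
  have : ξ = V.starProjection ξ + π ξ := by simp [π]
  rw [this]
  exact H.add_mem (hVH _ (V.starProjection_apply_mem ξ)) hπξ.1

theorem closure_eq_dualLattice_dualLattice (N : Submodule ℤ E) :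
    closure (N : Set E) = N.dualLattice.dualLattice := by
  refine subset_antisymm
    (closure_minimal N.le_dualLattice_dualLattice N.dualLattice.isClosed_dualLattice) ?_
  rw [← topologicalClosure_coe, ← dualLattice_dualLattice_of_isClosed N.isClosed_topologicalClosure]
  exact dualLattice_anti (dualLattice_anti N.le_topologicalClosure)

end Submodule

end InnerProduct

def intLatticeAddSpan {ι : Type*} (u v : ι → ℝ) : Submodule ℤ (ι → ℝ) where
  carrier := {x | ∃ (m : ι → ℤ) (s t : ℝ), x = fun i => (m i : ℝ) + s * u i + t * v i}
  add_mem' := by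
    rintro _ _ ⟨m₁, s₁, t₁, rfl⟩ ⟨m₂, s₂, t₂, rfl⟩
    exact ⟨m₁ + m₂, s₁ + s₂, t₁ + t₂, by ext i; simp only [Pi.add_apply]; push_cast; ring⟩
  zero_mem' := ⟨0, 0, 0, by ext i; simp⟩
  smul_mem' := by
    rintro c _ ⟨m, s, t, rfl⟩
    exact ⟨c • m, c * s, c * t, by ext i; simp; ring⟩

section Coordinates

variable {ι : Type*} [Fintype ι]

theorem closure_eq_setOf_forall_dotProduct (G : Submodule ℤ (ι → ℝ)) :
    closure (G : Set (ι → ℝ)) =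
      {ξ | ∀ y : ι → ℝ, (∀ g ∈ G, ∃ z : ℤ, g ⬝ᵥ y = z) → ∃ z : ℤ, y ⬝ᵥ ξ = z} := by
  set e := EuclideanSpace.equiv ι ℝ
  have hinner (x y : EuclideanSpace ℝ ι) : ⟪x, y⟫ = e y ⬝ᵥ e x := by
    simp [EuclideanSpace.inner_eq_star_dotProduct]; rfl
  set G' := G.comap (e.toLinearMap.restrictScalars ℤ)
  have h := G'.closure_eq_dualLattice_dualLattice
  rw [show (G' : Set _) = e ⁻¹' G from rfl, ← e.preimage_closure] at h
  ext ξ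
  have := congrArg (e.symm ξ ∈ ·) h
  simpa [G', Submodule.mem_dualLattice, hinner, e.surjective.forall] using this

lemma intCast_add_mul_add_mul_dotProduct (u v y : ι → ℝ) (m : ι → ℤ) (s t : ℝ) :
    (fun i => (m i : ℝ) + s * u i + t * v i) ⬝ᵥ y =
      ((↑) ∘ m : ι → ℝ) ⬝ᵥ y + s * (y ⬝ᵥ u) + t * (y ⬝ᵥ v) := by
  simp only [dotProduct, Function.comp_apply, Finset.mul_sum, ← Finset.sum_add_distrib]
  exact Finset.sum_congr rfl fun i _ => by ring

lemma forall_mem_intLatticeAddSpan_dotProduct_iff (u v y : ι → ℝ) :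
    (∀ g ∈ intLatticeAddSpan u v, ∃ z : ℤ, g ⬝ᵥ y = z) ↔
      ∃ l : ι → ℤ, y = (↑) ∘ l ∧ y ⬝ᵥ u = 0 ∧ y ⬝ᵥ v = 0 := by
  classical
  constructor
  · intro hy
    have hcoord (i : ι) : ∃ z : ℤ, y i = z := by
      obtain ⟨z, hz⟩ := hy _ ⟨Pi.single i 1, 0, 0, rfl⟩
      rw [intCast_add_mul_add_mul_dotProduct] at hz
      exact ⟨z, by simpa [dotProduct, Pi.single_apply, apply_ite] using hz⟩
    choose l hl using hcoord
    refine ⟨l, funext hl, eq_zero_of_forall_mul_eq_intCast fun s => ?_,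
      eq_zero_of_forall_mul_eq_intCast fun t => ?_⟩
    · obtain ⟨z, hz⟩ := hy _ ⟨0, s, 0, rfl⟩
      rw [intCast_add_mul_add_mul_dotProduct] at hz
      exact ⟨z, by simpa using hz⟩
    · obtain ⟨z, hz⟩ := hy _ ⟨0, 0, t, rfl⟩
      rw [intCast_add_mul_add_mul_dotProduct] at hz
      exact ⟨z, by simpa using hz⟩
  · rintro ⟨l, rfl, hu, hv⟩ _ ⟨m, s, t, rfl⟩
    refine ⟨∑ i, m i * l i, ?_⟩
    rw [intCast_add_mul_add_mul_dotProduct, hu, hv]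
    simp [dotProduct]

lemma sum_intCast_mul_eq_zero_iff (l : ι → ℤ) (α : ι → ℂ) :
    ∑ i, (l i : ℂ) * α i = 0 ↔
      ((↑) ∘ l : ι → ℝ) ⬝ᵥ (fun i => (α i).re) = 0 ∧
        ((↑) ∘ l : ι → ℝ) ⬝ᵥ (fun i => (α i).im) = 0 := by
  simp [Complex.ext_iff, Complex.re_sum, Complex.im_sum, dotProduct]

end Coordinates

theorem stmt_1 (n : ℕ) (α : Fin n → ℂ) :
    {ξ : Fin n → ℝ | ∀ l : Fin n → ℤ,
        (∑ i, (l i : ℂ) * α i) = 0 → ∃ z : ℤ, ∑ i, (l i : ℝ) * ξ i = z} =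
    closure {x : Fin n → ℝ | ∃ (m : Fin n → ℤ) (s t : ℝ),
        x = fun i => (m i : ℝ) + s * (α i).re + t * (α i).im} := by
  have hS : {x : Fin n → ℝ | ∃ (m : Fin n → ℤ) (s t : ℝ),
      x = fun i => (m i : ℝ) + s * (α i).re + t * (α i).im} =
      intLatticeAddSpan (fun i => (α i).re) (fun i => (α i).im) := rfl
  rw [hS, closure_eq_setOf_forall_dotProduct]
  ext ξ
  simp only [Set.mem_ofPred_eq, forall_mem_intLatticeAddSpan_dotProduct_iff]
  constructor
  · rintro h _ ⟨l, rfl, hre, him⟩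
    exact h l ((sum_intCast_mul_eq_zero_iff l α).mpr ⟨hre, him⟩)
  · intro h l hl
    exact h _ ⟨l, rfl, (sum_intCast_mul_eq_zero_iff l α).mp hl⟩
end

section
/- If α₁,…,αₙ ∈ ℂ are linearly independent over ℚ, then the set of n-tuples ({Re(X·α₁)}, …, {Re(X·αₙ)}) for X ranging over ℂ is dense in the torus [0,1)ⁿ, where {x} denotes the fractional part of x. -/
/-!
Let `W = {(Re(X αₖ))ₖ : X ∈ ℂ} ⊆ ℝⁿ` and let `G` be the closure of `W + ℤⁿ`. A proper closed
subgroup of a finite-dimensional real space is mapped into `ℤ` by a nonzero linear functional: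
split off the largest subspace `U` contained in it; on a complement `C` of `U` the subgroup contains
no line, so it is discrete, hence contained in a lattice of `C` or in a proper subspace of `C`.
If `G ≠ ℝⁿ`, such a functional `f` vanishes on the subspace `W`, so its integer coefficients
`lₖ = f(eₖ)` satisfy `∑ lₖ αₖ = 0`, contradicting linear independence.
-/

open Module Submodule Filter Topology

theorem tendsto_floor_div_mul {ι : Type*} {l : Filter ι} {c : ι → ℝ} (hc0 : ∀ i, 0 < c i)
    (hc : Tendsto c l (𝓝 0)) (t : ℝ) : Tendsto (fun i => ⌊t / c i⌋ * c i) l (𝓝 t) := by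
  have hlow : Tendsto (fun i => t - c i) l (𝓝 t) := by simpa using tendsto_const_nhds.sub hc
  refine tendsto_of_tendsto_of_tendsto_of_le_of_le hlow tendsto_const_nhds (fun i => ?_)
    (fun i => ?_)
  · have := mul_le_mul_of_nonneg_right (Int.sub_one_lt_floor (t / c i)).le (hc0 i).le
    rwa [sub_mul, div_mul_cancel₀ _ (hc0 i).ne', one_mul] at this
  · exact (le_div_iff₀ (hc0 i)).mp (Int.floor_le (t / c i))

namespace AddSubgroup

section Submodule

variable {R M : Type*} [Semiring R] [AddCommGroup M] [Module R M]

def largestSubmodule (H : AddSubgroup M) : Submodule R M where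
  carrier := {u | ∀ t : R, t • u ∈ H}
  zero_mem' t := by simp [H.zero_mem]
  add_mem' hu hv t := by simpa [smul_add] using H.add_mem (hu t) (hv t)
  smul_mem' c u hu t := by simpa [smul_smul] using hu (t * c)

theorem mem_of_mem_largestSubmodule (H : AddSubgroup M) {u : M}
    (hu : u ∈ H.largestSubmodule (R := R)) : u ∈ H := by
  simpa using hu 1

end Submodule

theorem exists_norm_lt_of_not_discreteTopology {E : Type*} [NormedAddCommGroup E]
    (H : AddSubgroup E) (hH : ¬ DiscreteTopology H) {ε : ℝ} (hε : 0 < ε) :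
    ∃ x ∈ H, x ≠ 0 ∧ ‖x‖ < ε := by
  rw [discreteTopology_iff_isOpen_singleton_zero, Metric.isOpen_singleton_iff] at hH
  push Not at hH
  obtain ⟨x, hx, hx0⟩ := hH ε hε
  exact ⟨x, x.2, by simpa using hx0, by simpa using hx⟩

variable {E : Type*} [NormedAddCommGroup E] [NormedSpace ℝ E] [FiniteDimensional ℝ E]

/- Rescaled small elements of `H` accumulate at some `u` on the unit sphere; integer multiples of
them then approximate every `t • u`. -/
theorem exists_ne_zero_forall_smul_mem_of_not_discreteTopology (H : AddSubgroup E)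
    (hc : IsClosed (H : Set E)) (hH : ¬ DiscreteTopology H) :
    ∃ u ≠ 0, ∀ t : ℝ, t • u ∈ H := by
  choose x hxH hx0 hxε using fun k : ℕ =>
    H.exists_norm_lt_of_not_discreteTopology hH (Nat.one_div_pos_of_nat (n := k))
  have hxpos : ∀ k, 0 < ‖x k‖ := fun k => norm_pos_iff.mpr (hx0 k)
  have hx_lim : Tendsto (fun k => ‖x k‖) atTop (𝓝 0) :=
    squeeze_zero (fun _ => norm_nonneg _) (fun k => (hxε k).le)
      tendsto_one_div_add_atTop_nhds_zero_nat
  obtain ⟨u, hu, φ, hφ, hu_lim⟩ := (isCompact_sphere (0 : E) 1).tendsto_subseq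
    (x := fun k => ‖x k‖⁻¹ • x k) fun k => by simp [norm_smul, (hxpos k).ne']
  refine ⟨u, ne_zero_of_mem_unit_sphere ⟨u, hu⟩, fun t => ?_⟩
  have hmul_lim := (tendsto_floor_div_mul (fun k => hxpos (φ k))
    (hx_lim.comp hφ.tendsto_atTop) t).smul hu_lim
  refine hc.mem_of_tendsto hmul_lim (Eventually.of_forall fun k => ?_)
  have hmul : (⌊t / ‖x (φ k)‖⌋ * ‖x (φ k)‖) • (‖x (φ k)‖⁻¹ • x (φ k)) =
      ⌊t / ‖x (φ k)‖⌋ • x (φ k) := by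
    rw [smul_smul, mul_assoc, mul_inv_cancel₀ (hxpos _).ne', mul_one, Int.cast_smul_eq_zsmul]
  simpa [hmul] using zsmul_mem (hxH (φ k)) _

theorem exists_int_valued_dual_of_discreteTopology [Nontrivial E] (L : AddSubgroup E)
    [DiscreteTopology L] : ∃ f : E →ₗ[ℝ] ℝ, f ≠ 0 ∧ ∀ x ∈ L, ∃ z : ℤ, f x = z := by
  set L' : Submodule ℤ E := L.toIntSubmodule
  have : DiscreteTopology L' := ‹DiscreteTopology L›
  by_cases hspan : span ℝ (L' : Set E) = ⊤
  · have : IsZLattice ℝ L' := ⟨hspan⟩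
    let b := Free.chooseBasis ℤ L'
    let b' := b.ofZLatticeBasis ℝ L'
    obtain ⟨i⟩ := b'.index_nonempty
    refine ⟨b'.coord i, fun h => ?_, fun x hx => ⟨b.repr ⟨x, hx⟩ i, ?_⟩⟩
    · simpa [b'] using LinearMap.congr_fun h (b' i)
    · exact b.ofZLatticeBasis_repr_apply ℝ L' ⟨x, hx⟩ i
  · obtain ⟨f, hf0, hf⟩ :=
      exists_dual_map_eq_bot_of_lt_top (lt_top_iff_ne_top.mpr hspan) inferInstance
    refine ⟨f, hf0, fun x hx => ⟨0, ?_⟩⟩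
    exact_mod_cast (Submodule.eq_bot_iff _).mp hf (f x) (Submodule.mem_map_of_mem (subset_span hx))

theorem exists_int_valued_dual_of_isClosed (H : AddSubgroup E) (hc : IsClosed (H : Set E))
    (hH : H ≠ ⊤) : ∃ f : E →ₗ[ℝ] ℝ, f ≠ 0 ∧ ∀ x ∈ H, ∃ z : ℤ, f x = z := by
  set U : Submodule ℝ E := H.largestSubmodule
  obtain ⟨C, hUC⟩ := U.exists_isCompl
  set L : AddSubgroup C := H.comap C.subtype.toAddMonoidHom
  have hC : Nontrivial C := by
    refine Submodule.nontrivial_iff_ne_bot.mpr fun hC => hH (eq_top_iff.mpr fun x _ => ?_)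
    have hU : U = ⊤ := by simpa [hC] using hUC.sup_eq_top
    exact H.mem_of_mem_largestSubmodule (hU ▸ Submodule.mem_top : x ∈ U)
  have hL : DiscreteTopology L := by
    by_contra hL
    obtain ⟨u, hu0, hu⟩ := L.exists_ne_zero_forall_smul_mem_of_not_discreteTopology
      (hc.preimage continuous_subtype_val) hL
    exact hu0 (Subtype.ext (hUC.disjoint.le_bot ⟨fun t => hu t, u.2⟩))
  obtain ⟨g, hg0, hg⟩ := L.exists_int_valued_dual_of_discreteTopology
  refine ⟨LinearMap.ofIsCompl hUC.symm g 0, fun h => hg0 (LinearMap.ext fun c => ?_), ?_⟩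
  · simpa using LinearMap.congr_fun h c
  · intro x hx
    obtain ⟨c, hcC, u, huU, rfl⟩ :=
      Submodule.mem_sup.mp (hUC.symm.sup_eq_top ▸ Submodule.mem_top : x ∈ C ⊔ U)
    obtain ⟨z, hz⟩ := hg ⟨c, hcC⟩
      (by simpa [L] using H.sub_mem hx (H.mem_of_mem_largestSubmodule huU))
    refine ⟨z, ?_⟩
    simpa [LinearMap.ofIsCompl_apply_left hUC.symm ⟨c, hcC⟩,
      LinearMap.ofIsCompl_apply_right hUC.symm ⟨u, huU⟩] using hz

end AddSubgroup

theorem LinearMap.eq_zero_of_int_valued_on_submodule {M : Type*} [AddCommGroup M]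
    [Module ℝ M] (f : M →ₗ[ℝ] ℝ) (V : Submodule ℝ M) (hf : ∀ v ∈ V, ∃ z : ℤ, f v = z) {v : M}
    (hv : v ∈ V) : f v = 0 := by
  by_contra h
  obtain ⟨z, hz⟩ := hf _ (V.smul_mem (2 * f v)⁻¹ hv)
  have h2z : (2 * z : ℝ) = 1 := by
    rw [← hz, map_smul, smul_eq_mul]
    field_simp
  have : 2 * z = 1 := by exact_mod_cast h2z
  omega

abbrev intPoints (ι : Type*) : AddSubgroup (ι → ℝ) := ((Int.castAddHom ℝ).compLeft ι).range

theorem dense_submodule_sup_intPoints {ι : Type*} [Fintype ι] (V : Submodule ℝ (ι → ℝ))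
    (hV : ∀ l : ι → ℤ, (∀ v ∈ V, ∑ i, (l i : ℝ) * v i = 0) → l = 0) :
    Dense ((V.toAddSubgroup ⊔ intPoints ι : AddSubgroup (ι → ℝ)) : Set (ι → ℝ)) := by
  classical
  set G := (V.toAddSubgroup ⊔ intPoints ι).topologicalClosure
  suffices G = ⊤ by
    rw [dense_iff_closure_eq, ← AddSubgroup.topologicalClosure_coe]
    exact congrArg SetLike.coe this
  by_contra hG
  obtain ⟨f, hf0, hf⟩ :=
    G.exists_int_valued_dual_of_isClosed (AddSubgroup.isClosed_topologicalClosure _) hG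
  have hsub : V.toAddSubgroup ⊔ intPoints ι ≤ G := AddSubgroup.le_topologicalClosure _
  choose l hl using fun i => hf (Pi.single i 1) (hsub (AddSubgroup.mem_sup_right
    ⟨Pi.single i 1, by ext; simp [Pi.single_apply]⟩))
  have hsingle : ∀ i : ι, (fun j => if i = j then (1 : ℝ) else 0) = Pi.single i 1 := fun i => by
    ext j; simp [Pi.single_apply, @eq_comm _ i]
  have hf_apply : ∀ x, f x = ∑ i, (l i : ℝ) * x i := fun x => by
    simp [f.pi_apply_eq_sum_univ x, hsingle, hl, mul_comm]
  have hl0 : l = 0 := hV l fun v hv => by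
    rw [← hf_apply]
    exact f.eq_zero_of_int_valued_on_submodule V
      (fun v hv => hf v (hsub (AddSubgroup.mem_sup_left hv))) hv
  exact hf0 (LinearMap.ext fun x => by simp [hf_apply, hl0])

noncomputable def reMulLinearMap {ι : Type*} (α : ι → ℂ) : ℂ →ₗ[ℝ] ι → ℝ :=
  LinearMap.pi fun k => Complex.reLm ∘ₗ LinearMap.mulRight ℝ (α k)

@[simp]
theorem reMulLinearMap_apply {ι : Type*} (α : ι → ℂ) (X : ℂ) (k : ι) :
    reMulLinearMap α X k = (X * α k).re := rfl

theorem sum_intCast_mul_re_mul {ι : Type*} [Fintype ι] (α : ι → ℂ) (l : ι → ℤ) (X : ℂ) :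
    ∑ i, (l i : ℝ) * (X * α i).re = (X * ∑ i, (l i : ℂ) * α i).re := by
  rw [Finset.mul_sum, Complex.re_sum]
  refine Finset.sum_congr rfl fun i _ => ?_
  rw [mul_left_comm, ← Complex.ofReal_intCast, Complex.re_ofReal_mul]

theorem stmt_2 (n : ℕ) (α : Fin n → ℂ)
    (hind : ∀ l : Fin n → ℤ, (∑ i, (l i : ℂ) * α i) = 0 → l = 0) :
    ∀ (β : Fin n → ℝ) (ε : ℝ), 0 < ε →
      ∃ (X : ℂ) (m : Fin n → ℤ), ∀ k : Fin n,
        |(X * α k).re - (m k : ℝ) - β k| < ε := by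
  intro β ε hε
  have hdense := dense_submodule_sup_intPoints (LinearMap.range (reMulLinearMap α)) fun l hl => by
    refine hind l (Complex.ext ?_ ?_)
    · simpa [sum_intCast_mul_re_mul] using hl _ ⟨1, rfl⟩
    · simpa [sum_intCast_mul_re_mul] using hl _ ⟨-Complex.I, rfl⟩
  obtain ⟨y, hy, hβy⟩ := hdense.exists_dist_lt β hε
  obtain ⟨_, ⟨X, rfl⟩, _, ⟨m, rfl⟩, rfl⟩ := AddSubgroup.mem_sup.mp hy
  refine ⟨X, -m, fun k => ?_⟩
  have hk := (dist_pi_lt_iff hε).mp hβy k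
  rw [Real.dist_eq, abs_sub_comm] at hk
  simpa [sub_eq_add_neg] using hk
end

section
/- Let l = (l₁,…,lₙ) ∈ ℤⁿ with gcd(l₁,…,lₙ) = 1, and let E = {x ∈ ℝⁿ : l·x ∈ ℤ}. Let δ be the ℓ^∞-distance from (1/2)·𝟙 to E. Then δ = 0 if ‖l‖₁ = ∑|lᵢ| is even, and δ = 1/(2‖l‖₁) if ‖l‖₁ is odd. -/
/-!
For `x` on the hyperplane `∑ cᵢ xᵢ = z`, Hölder's inequality gives
`|z - ∑ cᵢ pᵢ| ≤ ‖c‖₁ ‖x - p‖_∞`, and moving `p` along `sign c` attains this bound; so the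
ℓ^∞-distance from `p` to the integer level sets of `c` is the distance from `∑ cᵢ pᵢ` to `ℤ`,
divided by `‖c‖₁`. At `p = ½𝟙` this is `(∑ lᵢ) / 2`, and `∑ lᵢ ≡ ‖l‖₁ (mod 2)`.
-/

open Metric

theorem Int.even_sum_natAbs_iff {ι : Type*} (s : Finset ι) (f : ι → ℤ) :
    Even (∑ i ∈ s, (f i).natAbs) ↔ Even (∑ i ∈ s, f i) := by
  induction s using Finset.cons_induction with
  | empty => simp
  | cons a s ha ih => simp [Finset.sum_cons, Nat.even_add, Int.even_add, ih]

theorem half_le_abs_intCast_sub_half {m : ℤ} (hm : Odd m) (z : ℤ) :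
    1 / 2 ≤ |(z : ℝ) - m / 2| := by
  have hne : 2 * z - m ≠ 0 := fun h ↦ Int.not_even_iff_odd.mpr hm ⟨z, by omega⟩
  have hone : (1 : ℝ) ≤ |((2 * z - m : ℤ) : ℝ)| := by exact_mod_cast Int.one_le_abs hne
  rw [show (z : ℝ) - m / 2 = ((2 * z - m : ℤ) : ℝ) / 2 by push_cast; ring, abs_div,
    abs_two]
  linarith

section IntLevelSet

variable {ι : Type*} [Fintype ι]

def intLevelSet (c : ι → ℝ) : Set (ι → ℝ) :=
  {x | ∃ z : ℤ, ∑ i, c i * x i = z}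

theorem abs_sum_mul_sub_le (c x y : ι → ℝ) :
    |∑ i, c i * (x i - y i)| ≤ (∑ i, |c i|) * dist x y :=
  calc |∑ i, c i * (x i - y i)| ≤ ∑ i, |c i| * |x i - y i| := by
        simpa only [abs_mul] using Finset.abs_sum_le_sum_abs (fun i ↦ c i * (x i - y i)) Finset.univ
    _ ≤ ∑ i, |c i| * dist x y := by
        gcongr with i
        exact (Real.dist_eq _ _).symm.le.trans (dist_le_pi_dist x y i)
    _ = (∑ i, |c i|) * dist x y := (Finset.sum_mul _ _ _).symm

theorem div_le_infDist_intLevelSet {c : ι → ℝ} (hc : 0 < ∑ i, |c i|) (p : ι → ℝ) {r : ℝ}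
    (hr : ∀ z : ℤ, r ≤ |z - ∑ i, c i * p i|) :
    r / ∑ i, |c i| ≤ infDist p (intLevelSet c) := by
  refine (le_infDist (⟨0, 0, by simp⟩ : (intLevelSet c).Nonempty)).mpr ?_
  rintro x ⟨z, hz⟩
  rw [div_le_iff₀' hc]
  calc r ≤ |z - ∑ i, c i * p i| := hr z
    _ = |∑ i, c i * (x i - p i)| := by simp only [← hz, mul_sub, Finset.sum_sub_distrib]
    _ ≤ (∑ i, |c i|) * dist x p := abs_sum_mul_sub_le c x p
    _ = (∑ i, |c i|) * dist p x := by rw [dist_comm]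

theorem infDist_intLevelSet_le {c : ι → ℝ} (hc : 0 < ∑ i, |c i|) (p : ι → ℝ) (z : ℤ) :
    infDist p (intLevelSet c) ≤ |z - ∑ i, c i * p i| / ∑ i, |c i| := by
  set t := (z - ∑ i, c i * p i) / ∑ i, |c i|
  -- move `p` by `t` along `sign c`, which changes `∑ c i * x i` by exactly `t * ∑ |c i|`
  let x : ι → ℝ := fun i ↦ p i + t * SignType.sign (c i)
  have hx : x ∈ intLevelSet c := by
    refine ⟨z, ?_⟩
    have hsum : ∑ i, c i * x i = ∑ i, c i * p i + t * ∑ i, |c i| := by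
      simp only [x, mul_add, Finset.sum_add_distrib, Finset.mul_sum, ← self_mul_sign]
      congr 1; exact Finset.sum_congr rfl fun i _ ↦ by ring
    rw [hsum, div_mul_cancel₀ _ hc.ne']
    ring
  refine (infDist_le_dist_of_mem hx).trans ((dist_pi_le_iff (by positivity)).mpr fun i ↦ ?_)
  have hsign : |((SignType.sign (c i) : SignType) : ℝ)| ≤ 1 := by
    rcases SignType.sign (c i) with _ | _ | _ <;> simp
  have ht : |t| = |z - ∑ i, c i * p i| / ∑ i, |c i| := by rw [abs_div, abs_of_pos hc]
  rw [Real.dist_eq, show p i - x i = -(t * SignType.sign (c i)) by simp only [x]; ring,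
    abs_neg, abs_mul, ← ht]
  exact mul_le_of_le_one_right (abs_nonneg _) hsign

end IntLevelSet

theorem stmt_4_general (n : ℕ) (l : Fin n → ℤ)
    (E : Set (Fin n → ℝ))
    (hE : E = {x | ∃ z : ℤ, ∑ i, (l i : ℝ) * x i = z})
    (δ : ℝ) (hδ : δ = Metric.infDist (fun _ => (1/2 : ℝ)) E) :
    (Even (∑ i, (l i).natAbs) → δ = 0) ∧
    (Odd (∑ i, (l i).natAbs) → δ = 1 / (2 * ∑ i, ((l i).natAbs : ℝ))) := by
  change E = intLevelSet (fun i ↦ (l i : ℝ)) at hE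
  subst hE hδ
  have hcentre : ∑ i, (l i : ℝ) * (1 / 2) = ((∑ i, l i : ℤ) : ℝ) / 2 := by
    push_cast; rw [← Finset.sum_mul]; ring
  have hnorm : ∑ i, ((l i).natAbs : ℝ) = ∑ i, |(l i : ℝ)| := by
    simp only [Nat.cast_natAbs, Int.cast_abs]
  rw [← Nat.not_even_iff_odd, Int.even_sum_natAbs_iff, hnorm]
  refine ⟨fun ⟨k, hk⟩ ↦ infDist_zero_of_mem ⟨k, by rw [hcentre, hk]; push_cast; ring⟩,
    fun hodd ↦ ?_⟩
  rw [Int.not_even_iff_odd] at hodd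
  obtain ⟨k, hk⟩ := id hodd
  have hpos : 0 < ∑ i, |(l i : ℝ)| :=
    calc (0 : ℝ) < |((∑ i, l i : ℤ) : ℝ)| := by rw [abs_pos, Int.cast_ne_zero]; omega
      _ ≤ ∑ i, |(l i : ℝ)| := by push_cast; exact Finset.abs_sum_le_sum_abs _ _
  rw [show 1 / (2 * ∑ i, |(l i : ℝ)|) = 1 / 2 / ∑ i, |(l i : ℝ)| by ring]
  apply le_antisymm
  · refine (infDist_intLevelSet_le hpos _ (k + 1)).trans_eq ?_
    rw [hcentre, hk, show ((k + 1 : ℤ) : ℝ) - ((2 * k + 1 : ℤ) : ℝ) / 2 = 1 / 2 by push_cast; ring,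
      abs_of_pos one_half_pos]
  · exact div_le_infDist_intLevelSet hpos _ fun z ↦ hcentre ▸ half_le_abs_intCast_sub_half hodd z

theorem stmt_4 (n : ℕ) (l : Fin n → ℤ) (hgcd : Finset.univ.gcd l = 1)
    (E : Set (Fin n → ℝ))
    (hE : E = {x | ∃ z : ℤ, ∑ i, (l i : ℝ) * x i = z})
    (δ : ℝ) (hδ : δ = Metric.infDist (fun _ => (1/2 : ℝ)) E) :
    (Even (∑ i, (l i).natAbs) → δ = 0) ∧
    (Odd (∑ i, (l i).natAbs) → δ = 1 / (2 * ∑ i, ((l i).natAbs : ℝ))) :=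
  stmt_4_general n l E hE δ hδ
end

section
/- Let l ∈ ℤⁿ with ‖l‖₁ odd. Then for every x ∈ ℝⁿ with l·x ∈ ℤ, we have ‖x − (1/2)·𝟙‖_∞ ≥ 1/(2‖l‖₁). -/
theorem stmt_5 (n : ℕ) (l : Fin n → ℤ) (hodd : Odd (∑ i, (l i).natAbs))
    (x : Fin n → ℝ) (z : ℤ) (hx : ∑ i, (l i : ℝ) * x i = z) :
    1 / (2 * ∑ i, ((l i).natAbs : ℝ)) ≤ ‖x - fun _ => (1/2 : ℝ)‖ := by
  set y : Fin n → ℝ := x - fun _ => (1/2 : ℝ) with hy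
  set s : ℤ := ∑ i, l i with hs
  have hT : (∑ i, (l i).natAbs : ℤ) = ∑ i, |l i| := by
    exact Finset.sum_congr rfl fun i _ => Int.natCast_natAbs (l i)
  have hTodd : Odd (∑ i, |l i| : ℤ) := by
    rw [← hT]; exact_mod_cast hodd
  have heven : Even (∑ i, (|l i| + l i)) := by
    apply Finset.even_sum
    intro i _
    rcases abs_cases (l i) with ⟨h, _⟩ | ⟨h, _⟩
    · rw [h]; exact ⟨l i, by ring⟩
    · rw [h]; exact ⟨0, by ring⟩
  have hsodd : Odd s := by
    have h2 : ∑ i, (|l i| + l i) = (∑ i, |l i|) + s := by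
      rw [hs, Finset.sum_add_distrib]
    rw [h2] at heven
    have := heven.sub_odd hTodd
    simpa using this
  have hne : (2 * z - s : ℤ) ≠ 0 := by
    rcases hsodd with ⟨k, hk⟩; omega
  have habs : (1 : ℤ) ≤ |2 * z - s| := Int.one_le_abs hne
  have hsum : ∑ i, (l i : ℝ) * y i = (z : ℝ) - (s : ℝ) / 2 := by
    have h1 : ∀ i, (l i : ℝ) * y i = (l i : ℝ) * x i - (l i : ℝ) / 2 := by
      intro i; simp [hy]; ring
    rw [Finset.sum_congr rfl fun i _ => h1 i, Finset.sum_sub_distrib, hx, hs]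
    push_cast
    rw [← Finset.sum_div]
  have hL : (0 : ℝ) < ∑ i, ((l i).natAbs : ℝ) := by
    have : 0 < ∑ i, (l i).natAbs := hodd.pos
    exact_mod_cast this
  have hhalf : (1 : ℝ) ≤ 2 * |(z : ℝ) - (s : ℝ) / 2| := by
    have h1 : (1 : ℝ) ≤ |(2 * (z : ℝ) - s)| := by
      have : ((1 : ℤ) : ℝ) ≤ |((2 * z - s : ℤ) : ℝ)| := by
        rw [← Int.cast_abs]; exact_mod_cast habs
      push_cast at this; convert this using 2
    have h2 : |(2 * (z : ℝ) - s)| = 2 * |(z : ℝ) - (s : ℝ) / 2| := by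
      rw [show (2 * (z : ℝ) - s) = 2 * ((z : ℝ) - (s : ℝ) / 2) by ring, abs_mul]
      norm_num
    linarith [h2 ▸ h1]
  have hbound : |(z : ℝ) - (s : ℝ) / 2| ≤ (∑ i, ((l i).natAbs : ℝ)) * ‖y‖ := by
    rw [← hsum]
    calc |∑ i, (l i : ℝ) * y i| ≤ ∑ i, |(l i : ℝ) * y i| :=
          Finset.abs_sum_le_sum_abs _ _
      _ ≤ ∑ i, ((l i).natAbs : ℝ) * ‖y‖ := by
          apply Finset.sum_le_sum
          intro i _
          rw [abs_mul]
          have h3 : |(l i : ℝ)| = ((l i).natAbs : ℝ) := by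
            rw [Nat.cast_natAbs]; push_cast; rfl
          rw [h3]
          exact mul_le_mul_of_nonneg_left (norm_le_pi_norm y i) (by positivity)
      _ = (∑ i, ((l i).natAbs : ℝ)) * ‖y‖ := by rw [← Finset.sum_mul]
  rw [div_le_iff₀ (by positivity)]
  nlinarith [hhalf, hbound, abs_nonneg ((z : ℝ) - (s : ℝ) / 2)]
end

section
/- Let n ≥ 2 and ω = e^(2πi/n). The lattice Λₙ = {l ∈ ℤⁿ : ∑_{k=0}^{n−1} lₖ ωᵏ = 0} is generated (as a ℤ-module) by the vectors v_{p,i} for primes p dividing n and 0 ≤ i < n/p, where v_{p,i} has a 1 in positions i, i + n/p, i + 2n/p, …, i + (p−1)n/p and 0 elsewhere. -/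
/-!
Identify `ℤⁿ` with `ℤ[X]/(Xⁿ - 1)` through the basis `1, X, …, X^(n-1)`. The relations among the
powers of `ω` become the kernel of `X ↦ ω`, which is generated by `Φₙ` since `Φₙ` is the minimal
polynomial of `ω` over `ℤ`, and `v_{p,i}` becomes `X^i Φ_p(X^(n/p))`. Now
`Φ_p(X^(n/p)) = Φₙ h_p`, where `h_p` is the product of the `Φ_d` with `d ∣ n`, `d ∤ n/p`, `d ≠ n`,
and the `h_p` generate the unit ideal of `ℤ[X]`: a common root `x` in a field of characteristic
`ℓ` would be a primitive root of unity whose order is the `ℓ`-free part of each of these `d`, and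
comparing `q`-adic valuations forces one of them to be `n`. So `Φₙ` lies in the ideal generated by
the `Φ_p(X^(n/p))`, and in `ℤ[X]/(Xⁿ - 1)` this ideal is spanned over `ℤ` by the `X^i Φ_p(X^(n/p))`
with `i < n/p`, because `X^(n/p) Φ_p(X^(n/p)) = Φ_p(X^(n/p))` there.
-/

open Polynomial

universe u

theorem Ideal.restrictScalars_span_image_eq_span_pow_mul {R A ι : Type*} [CommSemiring R]
    [CommSemiring A] [Algebra R A] {x : A} (hx : Algebra.adjoin R {x} = ⊤) (P : Set ι)
    (s : ι → A) (m : ι → ℕ) (hm : ∀ i ∈ P, 0 < m i)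
    (hs : ∀ i ∈ P, x ^ m i * s i = s i) :
    (Ideal.span (s '' P)).restrictScalars R =
      Submodule.span R {a | ∃ i ∈ P, ∃ j < m i, x ^ j * s i = a} := by
  set W := Submodule.span R {a | ∃ i ∈ P, ∃ j < m i, x ^ j * s i = a}
  have x_mul_mem : ∀ w ∈ W, x * w ∈ W := by
    intro w hw
    induction hw using Submodule.span_induction with
    | mem w hw =>
      obtain ⟨i, hi, j, hj, rfl⟩ := hw
      apply Submodule.subset_span
      rcases (Nat.succ_le_of_lt hj).lt_or_eq with hj' | hj'
      · exact ⟨i, hi, j + 1, hj', by ring⟩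
      · refine ⟨i, hi, 0, hm i hi, ?_⟩
        rw [pow_zero, one_mul, ← mul_assoc, ← pow_succ', show j + 1 = m i from hj', hs i hi]
    | zero => simp
    | add u v _ _ hu hv => rw [mul_add]; exact W.add_mem hu hv
    | smul r u _ hu => rw [mul_smul_comm]; exact W.smul_mem r hu
  have mul_mem : ∀ a : A, ∀ w ∈ W, a * w ∈ W := by
    intro a
    have ha : a ∈ Algebra.adjoin R {x} := hx ▸ Algebra.mem_top
    induction ha using Algebra.adjoin_induction with
    | mem y hy => rw [Set.mem_singleton_iff.1 hy]; exact x_mul_mem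
    | algebraMap r => intro w hw; rw [← Algebra.smul_def]; exact W.smul_mem r hw
    | add a b _ _ ha hb => intro w hw; rw [add_mul]; exact W.add_mem (ha w hw) (hb w hw)
    | mul a b _ _ ha hb => intro w hw; rw [mul_assoc]; exact ha _ (hb w hw)
  refine le_antisymm (fun a ha => ?_) (Submodule.span_le.2 ?_)
  · change a ∈ Ideal.span (s '' P) at ha
    induction ha using Submodule.span_induction with
    | mem a ha =>
      obtain ⟨i, hi, rfl⟩ := ha
      exact Submodule.subset_span ⟨i, hi, 0, hm i hi, by simp⟩
    | zero => exact W.zero_mem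
    | add u v _ _ hu hv => exact W.add_mem hu hv
    | smul c u _ hu => exact mul_mem c u hu
  · rintro _ ⟨i, hi, j, -, rfl⟩
    exact Ideal.mul_mem_left _ _ (Ideal.subset_span ⟨i, hi, rfl⟩)

theorem Nat.factorization_eq_of_dvd_of_not_dvd_div {n p d : ℕ} (hn : n ≠ 0) (hp : p.Prime)
    (hdn : d ∣ n) (hd : ¬d ∣ n / p) : d.factorization p = n.factorization p := by
  have hd0 : d ≠ 0 := ne_zero_of_dvd_ne_zero hn hdn
  have hle := (Nat.factorization_le_iff_dvd hd0 hn).2 hdn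
  refine le_antisymm (hle p) (not_lt.1 fun hlt => hd (Nat.dvd_div_of_mul_dvd ?_))
  rw [← Nat.factorization_le_iff_dvd (mul_ne_zero hp.ne_zero hd0) hn,
    Nat.factorization_mul hp.ne_zero hd0, hp.factorization]
  intro q
  rcases eq_or_ne q p with rfl | hq
  · simp only [Finsupp.coe_add, Pi.add_apply, Finsupp.single_eq_same]
    omega
  · simpa [Finsupp.single_eq_of_ne hq] using hle q

theorem Nat.exists_eq_of_forall_ordCompl_eq {n ℓ e : ℕ} (hn : 1 < n) (d : ℕ → ℕ)
    (hd : ∀ p, p.Prime → p ∣ n →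
      d p ∣ n ∧ (d p).factorization p = n.factorization p ∧ ordCompl[ℓ] (d p) = e) :
    ∃ p, p.Prime ∧ p ∣ n ∧ d p = n := by
  have hn0 : n ≠ 0 := by omega
  have hd0 : ∀ p, p.Prime → p ∣ n → d p ≠ 0 := fun p hp hpn =>
    ne_zero_of_dvd_ne_zero hn0 (hd p hp hpn).1
  have hle : ∀ p, p.Prime → p ∣ n → ∀ q, (d p).factorization q ≤ n.factorization q :=
    fun p hp hpn => (Nat.factorization_le_iff_dvd (hd0 p hp hpn) hn0).2 (hd p hp hpn).1
  have away : ∀ p, p.Prime → p ∣ n → ∀ q ≠ ℓ, (d p).factorization q = n.factorization q := by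
    intro p hp hpn q hqℓ
    by_cases hq : q.Prime ∧ q ∣ n
    · calc (d p).factorization q = (ordCompl[ℓ] (d p)).factorization q := by
            rw [Nat.factorization_ordCompl, Finsupp.erase_ne hqℓ]
        _ = (ordCompl[ℓ] (d q)).factorization q := by
            rw [(hd p hp hpn).2.2, (hd q hq.1 hq.2).2.2]
        _ = n.factorization q := by
            rw [Nat.factorization_ordCompl, Finsupp.erase_ne hqℓ, (hd q hq.1 hq.2).2.1]
    · have hnq : n.factorization q = 0 := by
        rw [Nat.factorization_eq_zero_iff]; tauto
      have := hle p hp hpn q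
      omega
  obtain ⟨p, hp, hpn, hpℓ⟩ :
      ∃ p, p.Prime ∧ p ∣ n ∧ (d p).factorization ℓ = n.factorization ℓ := by
    by_cases hℓ : ℓ.Prime ∧ ℓ ∣ n
    · exact ⟨ℓ, hℓ.1, hℓ.2, (hd ℓ hℓ.1 hℓ.2).2.1⟩
    · have hp := Nat.minFac_prime (by omega : n ≠ 1)
      refine ⟨n.minFac, hp, n.minFac_dvd, ?_⟩
      have hnℓ : n.factorization ℓ = 0 := by
        rw [Nat.factorization_eq_zero_iff]; tauto
      have := hle _ hp n.minFac_dvd ℓ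
      omega
  refine ⟨p, hp, hpn, Nat.eq_of_factorization_eq (hd0 p hp hpn) hn0 fun q => ?_⟩
  rcases eq_or_ne q ℓ with rfl | hqℓ
  · exact hpℓ
  · exact away p hp hpn q hqℓ

namespace Polynomial

theorem expand_cyclotomic_prime_eq_sum (R : Type*) [CommRing R] (m : ℕ) {p : ℕ}
    (hp : p.Prime) : expand R m (cyclotomic p R) = ∑ t ∈ Finset.range p, X ^ (m * t) := by
  have := Fact.mk hp
  simp [cyclotomic_prime, pow_mul]

theorem expand_cyclotomic_prime_mul_X_pow_sub_one (R : Type*) [CommRing R] (m : ℕ) {p : ℕ}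
    (hp : p.Prime) : expand R m (cyclotomic p R) * (X ^ m - 1) = X ^ (m * p) - 1 := by
  have := Fact.mk hp
  simpa [pow_mul] using congrArg (expand R m) (cyclotomic_prime_mul_X_sub_one R p)

theorem expand_cyclotomic_prime_eq_prod (R : Type*) [CommRing R] {n p : ℕ} (hn : n ≠ 0)
    (hp : p.Prime) (hpn : p ∣ n) :
    expand R (n / p) (cyclotomic p R) =
      ∏ d ∈ n.divisors \ (n / p).divisors, cyclotomic d R := by
  have hm : 0 < n / p := Nat.div_pos (Nat.le_of_dvd (Nat.pos_of_ne_zero hn) hpn) hp.pos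
  refine (monic_X_pow_sub_C (1 : R) hm.ne').isRegular.right (?_ : _ * _ = _ * _)
  rw [C_1, expand_cyclotomic_prime_mul_X_pow_sub_one R _ hp, Nat.div_mul_cancel hpn,
    ← prod_cyclotomic_eq_X_pow_sub_one hm,
    ← prod_cyclotomic_eq_X_pow_sub_one (Nat.pos_of_ne_zero hn),
    Finset.prod_sdiff (Nat.divisors_subset_of_dvd hn (Nat.div_dvd_of_dvd hpn))]

/-- In characteristic zero `ringChar K = 0` and `ordCompl[0] d = d`. -/
theorem isPrimitiveRoot_ordCompl_of_isRoot_cyclotomic {K : Type*} [Field K] {d : ℕ}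
    (hd : d ≠ 0) {x : K} (hx : (cyclotomic d K).IsRoot x) :
    IsPrimitiveRoot x (ordCompl[ringChar K] d) := by
  rcases CharP.char_is_prime_or_zero K (ringChar K) with hℓ | hℓ
  · have := Fact.mk hℓ
    have : NeZero ((ordCompl[ringChar K] d : ℕ) : K) :=
      ⟨fun h => Nat.not_dvd_ordCompl hℓ hd ((ringChar.spec K _).1 h)⟩
    rw [← Nat.ordProj_mul_ordCompl_eq_self d (ringChar K)] at hx
    exact isRoot_cyclotomic_prime_pow_mul_iff_of_charP.1 hx
  · have : CharZero K := charZero_of_inj_zero fun n h => by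
      simpa [hℓ] using (ringChar.spec K n).1 h
    have : NeZero (d : K) := ⟨Nat.cast_ne_zero.2 hd⟩
    simpa [hℓ] using isRoot_cyclotomic_iff.1 hx

theorem exists_field_forall_aeval_eq_zero {R : Type u} [CommRing R] {I : Ideal R[X]}
    (hI : I ≠ ⊤) :
    ∃ (K : Type u) (_ : Field K) (_ : Algebra R K) (x : K), ∀ f ∈ I, aeval x f = 0 := by
  obtain ⟨M, hM, hIM⟩ := Ideal.exists_le_maximal I hI
  let := Ideal.Quotient.field M
  refine ⟨R[X] ⧸ M, inferInstance, inferInstance, Ideal.Quotient.mkₐ R M X, fun f hf => ?_⟩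
  rw [aeval_algHom_apply, aeval_X_left_apply, Ideal.Quotient.mkₐ_eq_mk,
    Ideal.Quotient.eq_zero_iff_mem]
  exact hIM hf

noncomputable def cyclotomicCofactor (n p : ℕ) : ℤ[X] :=
  ∏ d ∈ (n.divisors \ (n / p).divisors).erase n, cyclotomic d ℤ

theorem cyclotomic_mul_cyclotomicCofactor {n p : ℕ} (hn : n ≠ 0) (hp : p.Prime)
    (hpn : p ∣ n) :
    cyclotomic n ℤ * cyclotomicCofactor n p = expand ℤ (n / p) (cyclotomic p ℤ) := by
  have hn_mem : n ∈ n.divisors \ (n / p).divisors := by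
    rw [Finset.mem_sdiff, Nat.mem_divisors, Nat.mem_divisors]
    exact ⟨⟨dvd_rfl, hn⟩, fun h => Nat.not_dvd_of_pos_of_lt (Nat.pos_of_ne_zero h.2)
      (Nat.div_lt_self (Nat.pos_of_ne_zero hn) hp.one_lt) h.1⟩
  rw [expand_cyclotomic_prime_eq_prod ℤ hn hp hpn, cyclotomicCofactor,
    Finset.mul_prod_erase _ (fun d => cyclotomic d ℤ) hn_mem]

theorem span_cyclotomicCofactor_eq_top {n : ℕ} (hn : 1 < n) :
    Ideal.span (cyclotomicCofactor n '' {p | p.Prime ∧ p ∣ n}) = ⊤ := by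
  by_contra hI
  obtain ⟨K, _, _, x, hx⟩ := exists_field_forall_aeval_eq_zero hI
  have hroot : ∀ p, p.Prime → p ∣ n →
      ∃ d ∈ (n.divisors \ (n / p).divisors).erase n, (cyclotomic d K).IsRoot x := by
    intro p hp hpn
    have := hx _ (Ideal.subset_span ⟨p, ⟨hp, hpn⟩, rfl⟩)
    rw [cyclotomicCofactor, map_prod, Finset.prod_eq_zero_iff] at this
    obtain ⟨d, hd, hxd⟩ := this
    exact ⟨d, hd, by rwa [aeval_def, eval₂_eq_eval_map, map_cyclotomic] at hxd⟩
  choose! d hd hdroot using hroot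
  have hn0 : n ≠ 0 := by omega
  obtain ⟨p, hp, hpn, hdp⟩ :=
    Nat.exists_eq_of_forall_ordCompl_eq hn d (ℓ := ringChar K) (e := orderOf x)
      fun p hp hpn => by
        obtain ⟨-, ⟨hdn, -⟩, hdnp⟩ := by
          simpa only [Finset.mem_erase, Finset.mem_sdiff, Nat.mem_divisors] using hd p hp hpn
        have hnp : n / p ≠ 0 := (Nat.div_pos (Nat.le_of_dvd (by omega) hpn) hp.pos).ne'
        exact ⟨hdn,
          Nat.factorization_eq_of_dvd_of_not_dvd_div hn0 hp hdn fun h => hdnp ⟨h, hnp⟩,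
          (isPrimitiveRoot_ordCompl_of_isRoot_cyclotomic (ne_zero_of_dvd_ne_zero hn0 hdn)
            (hdroot p hp hpn)).eq_orderOf⟩
  exact (Finset.mem_erase.1 (hd p hp hpn)).1 hdp

theorem cyclotomic_mem_span_expand_cyclotomic {n : ℕ} (hn : 1 < n) :
    cyclotomic n ℤ ∈
      Ideal.span ((fun p => expand ℤ (n / p) (cyclotomic p ℤ)) '' {p | p.Prime ∧ p ∣ n}) := by
  have hle : Ideal.span {cyclotomic n ℤ} *
        Ideal.span (cyclotomicCofactor n '' {p | p.Prime ∧ p ∣ n}) ≤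
      Ideal.span ((fun p => expand ℤ (n / p) (cyclotomic p ℤ)) '' {p | p.Prime ∧ p ∣ n}) := by
    rw [Ideal.span_mul_span']
    refine Ideal.span_mono ?_
    rintro _ ⟨_, rfl, _, ⟨p, ⟨hp, hpn⟩, rfl⟩, rfl⟩
    exact ⟨p, ⟨hp, hpn⟩, (cyclotomic_mul_cyclotomicCofactor (by omega) hp hpn).symm⟩
  simpa using hle (Ideal.mul_mem_mul (Ideal.mem_span_singleton_self _)
    ((span_cyclotomicCofactor_eq_top hn).symm ▸ Submodule.mem_top : (1 : ℤ[X]) ∈ _))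

end Polynomial

theorem Fin.sum_univ_ite_mod_eq {M : Type*} [AddCommMonoid M] {n m p i : ℕ} (hmp : m * p = n)
    (hi : i < m) (f : ℕ → M) :
    ∑ k : Fin n, (if (k : ℕ) % m = i then f k else 0) = ∑ t ∈ Finset.range p, f (i + m * t) := by
  rw [Fin.sum_univ_eq_sum_range (fun k => if k % m = i then f k else 0), ← Finset.sum_filter]
  symm
  refine Finset.sum_nbij' (fun t => i + m * t) (fun k => k / m) ?_ ?_ ?_ ?_ fun _ _ => rfl
  · intro t ht
    rw [Finset.mem_range] at ht
    rw [Finset.mem_filter, Finset.mem_range]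
    refine ⟨?_, by rw [Nat.add_mul_mod_self_left, Nat.mod_eq_of_lt hi]⟩
    subst hmp
    nlinarith
  · intro k hk
    rw [Finset.mem_filter, Finset.mem_range] at hk
    rw [Finset.mem_range]
    exact Nat.div_lt_of_lt_mul (hmp ▸ hk.1)
  · intro t _
    simp [Nat.add_mul_div_left _ _ (by omega : 0 < m), Nat.div_eq_of_lt hi]
  · intro k hk
    rw [Finset.mem_filter] at hk
    conv_rhs => rw [← Nat.mod_add_div k m, hk.2]

namespace AdjoinRoot

theorem ker_lift_X_pow_sub_one {K : Type*} [Field K] [CharZero K] {n : ℕ} (hn : 1 < n) {ω : K}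
    (hω : IsPrimitiveRoot ω n) (hωn : eval₂ (algebraMap ℤ K) ω (X ^ n - 1 : ℤ[X]) = 0) :
    RingHom.ker (lift (algebraMap ℤ K) ω hωn) =
      Ideal.span ((fun p => mk _ (expand ℤ (n / p) (cyclotomic p ℤ))) ''
        {p | p.Prime ∧ p ∣ n}) := by
  have hn0 : 0 < n := by omega
  have hΦ : aeval ω (cyclotomic n ℤ) = 0 := by
    rw [aeval_def, eval₂_eq_eval_map, map_cyclotomic]
    exact hω.isRoot_cyclotomic hn0
  refine le_antisymm (fun a ha => ?_) (Ideal.span_le.2 ?_)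
  · obtain ⟨P, rfl⟩ := mk_surjective a
    rw [RingHom.mem_ker, lift_mk, ← aeval_def] at ha
    obtain ⟨Q, rfl⟩ : cyclotomic n ℤ ∣ P := by
      rw [cyclotomic_eq_minpoly hω hn0]
      exact minpoly.isIntegrallyClosed_dvd (hω.isIntegral hn0) ha
    have := Ideal.mem_map_of_mem (mk (X ^ n - 1 : ℤ[X]))
      (cyclotomic_mem_span_expand_cyclotomic hn)
    rw [Ideal.map_span, ← Set.image_comp] at this
    exact map_mul (mk _) _ Q ▸ Ideal.mul_mem_right _ _ this
  · rintro _ ⟨p, ⟨hp, hpn⟩, rfl⟩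
    rw [SetLike.mem_coe, RingHom.mem_ker, lift_mk, ← aeval_def,
      ← cyclotomic_mul_cyclotomicCofactor (by omega) hp hpn, map_mul, hΦ, zero_mul]

theorem root_pow_mul_mk_expand_cyclotomic {R : Type*} [CommRing R] {n m p : ℕ} (hp : p.Prime)
    (hmp : m * p = n) :
    root (X ^ n - 1 : R[X]) ^ m * mk _ (expand R m (cyclotomic p R)) =
      mk _ (expand R m (cyclotomic p R)) := by
  subst hmp
  rw [← sub_eq_zero, ← mk_X, ← map_pow, ← map_mul, ← map_sub, ← sub_one_mul,
    mul_comm (X ^ m - 1 : R[X]), expand_cyclotomic_prime_mul_X_pow_sub_one R m hp, mk_self]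

noncomputable def powBasisXPowSubOne (R : Type*) [CommRing R] [Nontrivial R] {n : ℕ}
    (hn : n ≠ 0) : Module.Basis (Fin n) R (AdjoinRoot (X ^ n - 1 : R[X])) :=
  (powerBasis' (by simpa using monic_X_pow_sub_C (1 : R) hn)).basis.reindex
    (finCongr (by simpa using natDegree_X_pow_sub_C (n := n) (r := (1 : R))))

theorem powBasisXPowSubOne_apply (R : Type*) [CommRing R] [Nontrivial R] {n : ℕ} (hn : n ≠ 0)
    (k : Fin n) : powBasisXPowSubOne R hn k = root _ ^ (k : ℕ) := by
  simp [powBasisXPowSubOne]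

theorem powBasisXPowSubOne_equivFun_symm_indicator (R : Type*) [CommRing R] [Nontrivial R]
    {n m p i : ℕ} (hn : n ≠ 0) (hp : p.Prime) (hmp : m * p = n) (hi : i < m) :
    (powBasisXPowSubOne R hn).equivFun.symm (fun k => if (k : ℕ) % m = i then 1 else 0) =
      root _ ^ i * mk _ (expand R m (cyclotomic p R)) := by
  simp only [Module.Basis.equivFun_symm_apply, powBasisXPowSubOne_apply, ite_smul, one_smul,
    zero_smul, Fin.sum_univ_ite_mod_eq hmp hi (fun k => root (X ^ n - 1 : R[X]) ^ k),
    expand_cyclotomic_prime_eq_sum R m hp, map_sum, map_pow, mk_X, Finset.mul_sum, pow_add]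

end AdjoinRoot

theorem ker_linearCombination_pow_isPrimitiveRoot {K : Type*} [Field K] [CharZero K] {n : ℕ}
    (hn : 1 < n) {ω : K} (hω : IsPrimitiveRoot ω n) :
    LinearMap.ker (Fintype.linearCombination ℤ fun k : Fin n => ω ^ (k : ℕ)) =
      Submodule.span ℤ {v | ∃ p i, p.Prime ∧ p ∣ n ∧ i < n / p ∧
        v = fun j : Fin n => if (j : ℕ) % (n / p) = i then (1 : ℤ) else 0} := by
  set S := {v | ∃ p i, p.Prime ∧ p ∣ n ∧ i < n / p ∧
    v = fun j : Fin n => if (j : ℕ) % (n / p) = i then (1 : ℤ) else 0}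
  have hn0 : n ≠ 0 := by omega
  have hωn : eval₂ (algebraMap ℤ K) ω (X ^ n - 1 : ℤ[X]) = 0 := by simp [hω.pow_eq_one]
  set e := (AdjoinRoot.powBasisXPowSubOne ℤ hn0).equivFun
  set ev := AdjoinRoot.lift (algebraMap ℤ K) ω hωn
  have hev : ∀ l, Fintype.linearCombination ℤ (fun k : Fin n => ω ^ (k : ℕ)) l =
      ev (e.symm l) := by
    intro l
    simp [e, ev, Module.Basis.equivFun_symm_apply, AdjoinRoot.powBasisXPowSubOne_apply,
      Fintype.linearCombination_apply, zsmul_eq_mul]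
  have hker : (RingHom.ker ev).restrictScalars ℤ = Submodule.span ℤ (e.symm '' S) := by
    rw [AdjoinRoot.ker_lift_X_pow_sub_one hn hω, Ideal.restrictScalars_span_image_eq_span_pow_mul
      AdjoinRoot.adjoinRoot_eq_top _ _ _
      (fun p hp => Nat.div_pos (Nat.le_of_dvd (by omega) hp.2) hp.1.pos)
      fun p hp => AdjoinRoot.root_pow_mul_mk_expand_cyclotomic hp.1 (Nat.div_mul_cancel hp.2)]
    congr 1
    ext a
    constructor
    · rintro ⟨p, ⟨hp, hpn⟩, i, hi, rfl⟩
      exact ⟨_, ⟨p, i, hp, hpn, hi, rfl⟩, AdjoinRoot.powBasisXPowSubOne_equivFun_symm_indicator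
        ℤ hn0 hp (Nat.div_mul_cancel hpn) hi⟩
    · rintro ⟨_, ⟨p, i, hp, hpn, hi, rfl⟩, rfl⟩
      exact ⟨p, ⟨hp, hpn⟩, i, hi, (AdjoinRoot.powBasisXPowSubOne_equivFun_symm_indicator
        ℤ hn0 hp (Nat.div_mul_cancel hpn) hi).symm⟩
  ext l
  rw [LinearMap.mem_ker, hev, ← RingHom.mem_ker, ← Submodule.restrictScalars_mem ℤ, hker]
  exact Submodule.apply_mem_span_image_iff_mem_span (f := e.symm.toLinearMap) e.symm.injective

theorem stmt_9 (n : ℕ) (hn : 2 ≤ n) :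
    {l : Fin n → ℤ | ∑ k : Fin n, (l k : ℂ) *
        Complex.exp (2 * Real.pi * Complex.I / n) ^ (k : ℕ) = 0} =
    ↑(Submodule.span ℤ
      {v : Fin n → ℤ | ∃ (p : ℕ) (i : ℕ), p.Prime ∧ p ∣ n ∧ i < n / p ∧
        v = fun j : Fin n => if (j : ℕ) % (n / p) = i then (1 : ℤ) else 0}) := by
  rw [← ker_linearCombination_pow_isPrimitiveRoot hn (Complex.isPrimitiveRoot_exp n (by omega))]
  ext l
  simp [Fintype.linearCombination_apply, zsmul_eq_mul]
end

section
/- Let n ≥ 2 with n not a power of 2, let p be the smallest odd prime dividing n, and ω = e^(2πi/n). Then there exists a vector ξ ∈ ℝⁿ with each coordinate ξⱼ ∈ {(p−1)/(2p), (p+1)/(2p)} such that l·ξ ∈ ℤ for every l ∈ ℤⁿ satisfying ∑ lₖωᵏ = 0. -/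
/-!
Write `n = p ^ b * m` with `p ∤ m`. If `∑ lₖ ωᵏ = 0`, then `Φₙ ∣ L = ∑ lₖ Xᵏ` in `ℤ[X]`, and since
`Φₙ ≡ Φₘ ^ φ(p ^ b)` mod `p`, also `Φₘ ∣ L` in `𝔽ₚ[X]`. We take `ξⱼ = (p + εⱼ) / (2p)` for an
`m`-periodic sequence `ε` of signs `±1`. As `p + εⱼ` is even, `l · ξ ∈ ℤ` reduces to
`p ∣ ∑ lₖ εₖ`, i.e. to `L(S) ε ≡ 0` at index `0`, where `S` is the shift of sequences. It thus
suffices that `Φₘ` lies in the annihilator of `ε` mod `p`, an ideal of `𝔽ₚ[X]` containing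
`Xᵐ - 1`. As `Xᵐ - 1` is separable over `𝔽ₚ`, this holds once the ideal also contains
`(Xᵐ - 1) / (X^(m/ℓ) - 1)` for every prime `ℓ ∣ m`, i.e. once `p` divides every sum of `ε` along
a coset of the subgroup of order `ℓ` of `ℤ/m`.

We let `εⱼ` be a product over the primes `ℓ ∣ m` of a sign of the leading base-`ℓ` digit of
`j mod ℓ^(vₗ(m))`. Along such a coset this digit runs through all residues mod `ℓ` while the
other digits stay fixed, so the coset sum is a multiple of the total of the `ℓ`-th sign function.
That total is `0` for `ℓ = 2` and `p` for odd `ℓ`, which is possible because `ℓ ≥ p` by the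
minimality of `p`.
-/

open Polynomial Finset

section ShiftAnnihilator

variable (R : Type*) [CommRing R]

noncomputable def seqShift : Module.End R (ℕ → R) := LinearMap.funLeft R R Nat.succ

variable {R}

theorem seqShift_pow_apply (k : ℕ) (f : ℕ → R) (j : ℕ) : (seqShift R ^ k) f j = f (j + k) := by
  induction k generalizing f with
  | zero => rfl
  | succ k ih => rw [pow_succ, Module.End.mul_apply, ih]; rfl

noncomputable def shiftAnnihilator (f : ℕ → R) : Ideal R[X] :=
  Ideal.torsionOf R[X] (Module.AEval' (seqShift R)) (Module.AEval'.of (seqShift R) f)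

theorem mem_shiftAnnihilator {f : ℕ → R} {P : R[X]} :
    P ∈ shiftAnnihilator f ↔ aeval (seqShift R) P f = 0 := by
  rw [shiftAnnihilator, Ideal.mem_torsionOf_iff, ← Module.AEval.of_aeval_smul]
  simp

theorem X_pow_sub_one_mem_shiftAnnihilator {f : ℕ → R} {m : ℕ} (h : ∀ j, f (j + m) = f j) :
    X ^ m - 1 ∈ shiftAnnihilator f := by
  rw [mem_shiftAnnihilator]
  ext j
  simp [seqShift_pow_apply, h]

theorem sum_X_pow_mem_shiftAnnihilator {f : ℕ → R} {s ℓ : ℕ}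
    (h : ∀ j, ∑ t ∈ range ℓ, f (j + t * s) = 0) :
    ∑ t ∈ range ℓ, (X : R[X]) ^ (t * s) ∈ shiftAnnihilator f := by
  rw [mem_shiftAnnihilator]
  ext j
  simp [seqShift_pow_apply, h]

theorem sum_mul_eq_zero_of_mem_shiftAnnihilator {f : ℕ → R} {n : ℕ} {a : Fin n → R}
    (h : ∑ k : Fin n, C (a k) * X ^ (k : ℕ) ∈ shiftAnnihilator f) :
    ∑ k, a k * f k = 0 := by
  rw [mem_shiftAnnihilator] at h
  simpa [seqShift_pow_apply] using congrFun h 0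

end ShiftAnnihilator

theorem geom_sum_X_pow_mul_X_pow_div_sub_one {R : Type*} [CommRing R] {m ℓ : ℕ} (h : ℓ ∣ m) :
    (∑ t ∈ range ℓ, (X : R[X]) ^ (t * (m / ℓ))) * (X ^ (m / ℓ) - 1) = X ^ m - 1 := by
  simp_rw [mul_comm _ (m / ℓ), pow_mul]
  rw [geom_sum_mul, ← pow_mul, Nat.div_mul_cancel h]

theorem Nat.exists_mem_primeFactors_dvd_div_of_mem_properDivisors {m d : ℕ}
    (hd : d ∈ m.properDivisors) : ∃ ℓ ∈ m.primeFactors, d ∣ m / ℓ := by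
  obtain ⟨⟨k, rfl⟩, hlt⟩ := Nat.mem_properDivisors.1 hd
  have hk : k ≠ 1 := by rintro rfl; simp at hlt
  obtain ⟨ℓ, hℓ, hℓk⟩ := Nat.exists_prime_and_dvd hk
  have hd0 : d ≠ 0 := by rintro rfl; simp at hlt
  have hk0 : k ≠ 0 := by rintro rfl; simp at hlt
  refine ⟨ℓ, Nat.mem_primeFactors.2 ⟨hℓ, dvd_mul_of_dvd_right hℓk d, mul_ne_zero hd0 hk0⟩, ?_⟩
  rw [Nat.mul_div_assoc _ hℓk]
  exact dvd_mul_right d _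

theorem cyclotomic_mem_of_X_pow_sub_one_mem {F : Type*} [Field F] {m : ℕ} (hm : (m : F) ≠ 0)
    {I : Ideal F[X]} (hX : X ^ m - 1 ∈ I)
    (hgeom : ∀ ℓ ∈ m.primeFactors, ∑ t ∈ range ℓ, (X : F[X]) ^ (t * (m / ℓ)) ∈ I) :
    cyclotomic m F ∈ I := by
  have hm0 : 0 < m := Nat.pos_of_ne_zero (by rintro rfl; simp at hm)
  have hsep : (X ^ m - 1 : F[X]).Separable := by
    simpa using separable_X_pow_sub_C (1 : F) hm one_ne_zero
  simp_rw [Submodule.IsPrincipal.mem_iff_generator_dvd I] at hX hgeom ⊢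
  set g := Submodule.IsPrincipal.generator I
  have hcop : IsCoprime g (∏ d ∈ m.properDivisors, cyclotomic d F) := by
    refine IsCoprime.prod_right fun d hd => ?_
    obtain ⟨ℓ, hℓ, hdℓ⟩ := Nat.exists_mem_primeFactors_dvd_div_of_mem_properDivisors hd
    have hsplit := geom_sum_X_pow_mul_X_pow_div_sub_one (R := F) (Nat.dvd_of_mem_primeFactors hℓ)
    have hgeom_cop : IsCoprime (∑ t ∈ range ℓ, (X : F[X]) ^ (t * (m / ℓ))) (X ^ (m / ℓ) - 1) :=
      Separable.isCoprime (hsplit ▸ hsep)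
    have hcyc : cyclotomic d F ∣ X ^ (m / ℓ) - 1 := by
      obtain ⟨k, hk⟩ := hdℓ
      rw [hk, pow_mul]
      exact (cyclotomic.dvd_X_pow_sub_one d F).trans (sub_one_dvd_pow_sub_one _ k)
    exact (hgeom_cop.of_isCoprime_of_dvd_left (hgeom ℓ hℓ)).of_isCoprime_of_dvd_right hcyc
  refine hcop.dvd_of_dvd_mul_right ?_
  rwa [← prod_cyclotomic_eq_X_pow_sub_one hm0, ← Nat.insert_self_properDivisors hm0.ne',
    prod_insert Nat.self_notMem_properDivisors] at hX

/-- The leading base-`ℓ` digit of `j % ℓ ^ c` (for `c ≠ 0`). -/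
def topDigit (ℓ c j : ℕ) : ZMod ℓ := ((j / ℓ ^ (c - 1) : ℕ) : ZMod ℓ)

theorem topDigit_add_pow_mul {ℓ : ℕ} (hℓ : 0 < ℓ) (c j a : ℕ) :
    topDigit ℓ c (j + ℓ ^ (c - 1) * a) = topDigit ℓ c j + a := by
  rw [topDigit, topDigit, Nat.add_mul_div_left _ _ (pow_pos hℓ _), Nat.cast_add]

theorem topDigit_add_of_pow_dvd {ℓ c : ℕ} (hℓ : 0 < ℓ) (hc : c ≠ 0) {s : ℕ} (hs : ℓ ^ c ∣ s)
    (j : ℕ) : topDigit ℓ c (j + s) = topDigit ℓ c j := by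
  obtain ⟨a, rfl⟩ := hs
  obtain ⟨c, rfl⟩ := Nat.exists_eq_add_one_of_ne_zero hc
  have h := topDigit_add_pow_mul hℓ (c + 1) j (ℓ * a)
  rw [Nat.add_sub_cancel, ← mul_assoc, ← pow_succ] at h
  simpa using h

theorem Nat.factorization_ne_zero_of_mem_primeFactors {m ℓ : ℕ} (h : ℓ ∈ m.primeFactors) :
    m.factorization ℓ ≠ 0 :=
  Finsupp.mem_support_iff.1 h

theorem ZMod.sum_range_natCast {M : Type*} [AddCommMonoid M] (ℓ : ℕ) [NeZero ℓ]
    (F : ZMod ℓ → M) : ∑ t ∈ range ℓ, F t = ∑ x, F x :=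
  sum_nbij' (↑) ZMod.val (by simp) (by simp [ZMod.val_lt])
    (fun t ht => ZMod.val_cast_of_lt (mem_range.1 ht)) (fun x _ => ZMod.natCast_zmod_val x)
    (fun _ _ => rfl)

theorem sum_range_ite_lt {k ℓ : ℕ} (h : k ≤ ℓ) :
    ∑ d ∈ range ℓ, (if d < k then 1 else -1 : ℤ) = 2 * k - ℓ := by
  induction ℓ, h using Nat.le_induction with
  | base => rw [sum_ite_of_true fun d hd => mem_range.1 hd, sum_const, card_range, nsmul_one]; ring
  | succ ℓ hkℓ ih => rw [sum_range_succ, ih, if_neg (by omega)]; push_cast; ring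

theorem ZMod.sum_range_comp_add_natCast_mul {M : Type*} [AddCommMonoid M] {ℓ : ℕ} [Fact ℓ.Prime]
    (e : ZMod ℓ) {u : ZMod ℓ} (hu : u ≠ 0) (F : ZMod ℓ → M) :
    ∑ t ∈ range ℓ, F (e + t * u) = ∑ t ∈ range ℓ, F t := by
  rw [ZMod.sum_range_natCast ℓ (fun x => F (e + x * u)), ZMod.sum_range_natCast]
  exact Fintype.sum_bijective _
    ((add_right_injective e).comp (mul_left_injective₀ hu)).bijective_of_finite _ _ fun _ => rfl

theorem Nat.div_prime_eq_pow_mul_ordCompl {m ℓ : ℕ} (hℓ : ℓ ∈ m.primeFactors) :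
    m / ℓ = ℓ ^ (m.factorization ℓ - 1) * ordCompl[ℓ] m := by
  obtain ⟨c, hc⟩ :=
    Nat.exists_eq_add_one_of_ne_zero (Nat.factorization_ne_zero_of_mem_primeFactors hℓ)
  conv_lhs => rw [← Nat.ordProj_mul_ordCompl_eq_self m ℓ, hc, pow_succ', mul_assoc,
    Nat.mul_div_cancel_left _ (Nat.pos_of_mem_primeFactors hℓ)]
  rw [hc, Nat.add_sub_cancel, pow_succ']

noncomputable def digitSignSeq (m : ℕ) (G : (ℓ : ℕ) → ZMod ℓ → ℤ) (j : ℕ) : ℤ :=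
  ∏ ℓ ∈ m.primeFactors, G ℓ (topDigit ℓ (m.factorization ℓ) j)

theorem digitSignSeq_add_self (m : ℕ) (G : (ℓ : ℕ) → ZMod ℓ → ℤ) (j : ℕ) :
    digitSignSeq m G (j + m) = digitSignSeq m G j := by
  refine prod_congr rfl fun ℓ hℓ => ?_
  rw [topDigit_add_of_pow_dvd (Nat.prime_of_mem_primeFactors hℓ).pos
    (Nat.factorization_ne_zero_of_mem_primeFactors hℓ) ?_]
  exact Nat.ordProj_dvd m ℓ

theorem sum_digitSignSeq_add_mul_div (m : ℕ) (G : (ℓ : ℕ) → ZMod ℓ → ℤ) {ℓ : ℕ}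
    (hℓ : ℓ ∈ m.primeFactors) (j : ℕ) :
    ∑ t ∈ range ℓ, digitSignSeq m G (j + t * (m / ℓ)) =
      (∑ t ∈ range ℓ, G ℓ t) *
        ∏ q ∈ m.primeFactors.erase ℓ, G q (topDigit q (m.factorization q) j) := by
  have hℓp := Nat.prime_of_mem_primeFactors hℓ
  have hm0 := (Nat.mem_primeFactors.1 hℓ).2.2
  have hterm : ∀ t : ℕ, digitSignSeq m G (j + t * (m / ℓ)) =
      G ℓ (topDigit ℓ (m.factorization ℓ) j + t * (ordCompl[ℓ] m : ℕ)) *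
        ∏ q ∈ m.primeFactors.erase ℓ, G q (topDigit q (m.factorization q) j) := by
    intro t
    rw [digitSignSeq, ← mul_prod_erase _ _ hℓ]
    congr 1
    · rw [Nat.div_prime_eq_pow_mul_ordCompl hℓ, mul_left_comm, topDigit_add_pow_mul hℓp.pos]
      push_cast
      rfl
    · refine prod_congr rfl fun q hq => ?_
      obtain ⟨hqℓ, hq⟩ := mem_erase.1 hq
      have hqp := Nat.prime_of_mem_primeFactors hq
      have hdvd : q ^ m.factorization q ∣ m / ℓ :=
        Nat.dvd_div_of_mul_dvd (Nat.Coprime.mul_dvd_of_dvd_of_dvd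
          (Nat.Coprime.pow_right _ ((Nat.coprime_primes hℓp hqp).2 (Ne.symm hqℓ)))
          (Nat.dvd_of_mem_primeFactors hℓ) (Nat.ordProj_dvd m q))
      rw [topDigit_add_of_pow_dvd hqp.pos (Nat.factorization_ne_zero_of_mem_primeFactors hq)
        (dvd_mul_of_dvd_right hdvd t)]
  have : Fact ℓ.Prime := ⟨hℓp⟩
  simp_rw [hterm, ← sum_mul]
  rw [ZMod.sum_range_comp_add_natCast_mul _
    ((ZMod.natCast_eq_zero_iff _ _).not.2 (Nat.not_dvd_ordCompl hℓp hm0))]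

/-- `(ℓ + p) / 2` plus signs and `(ℓ - p) / 2` minus signs for odd `ℓ`, one of each for `ℓ = 2`. -/
def residueSign (p ℓ : ℕ) (x : ZMod ℓ) : ℤ :=
  if x.val < (ℓ + if ℓ = 2 then 0 else p) / 2 then 1 else -1

theorem residueSign_eq_one_or_eq_neg_one (p ℓ : ℕ) (x : ZMod ℓ) :
    residueSign p ℓ x = 1 ∨ residueSign p ℓ x = -1 := by
  unfold residueSign
  split_ifs <;> simp

theorem dvd_sum_range_residueSign {p ℓ : ℕ} (hp : Odd p) (hℓ : ℓ.Prime) (hpℓ : ℓ = 2 ∨ p ≤ ℓ) :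
    (p : ℤ) ∣ ∑ t ∈ range ℓ, residueSign p ℓ t := by
  have hval : ∀ t ∈ range ℓ, residueSign p ℓ t =
      if t < (ℓ + if ℓ = 2 then 0 else p) / 2 then 1 else -1 := fun t ht => by
    rw [residueSign, ZMod.val_cast_of_lt (mem_range.1 ht)]
  rw [sum_congr rfl hval]
  rcases eq_or_ne ℓ 2 with rfl | h2
  · simp [sum_range_succ]
  · have hℓodd := hℓ.odd_of_ne_two h2
    rw [if_neg h2, sum_range_ite_lt (by omega)]
    obtain ⟨a, rfl⟩ := hp
    obtain ⟨b, rfl⟩ := hℓodd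
    exact ⟨1, by omega⟩

noncomputable def signSeq (p m : ℕ) : ℕ → ℤ := digitSignSeq m (residueSign p)

theorem signSeq_eq_one_or_eq_neg_one (p m j : ℕ) : signSeq p m j = 1 ∨ signSeq p m j = -1 :=
  prod_induction (s := m.primeFactors) _ (fun x : ℤ => x = 1 ∨ x = -1)
    (by rintro _ _ (rfl | rfl) (rfl | rfl) <;> simp)
    (Or.inl rfl) fun ℓ _ => residueSign_eq_one_or_eq_neg_one p ℓ _

theorem dvd_sum_mul_signSeq {p m n : ℕ} [Fact p.Prime] (hp : Odd p) (hpm : ¬ p ∣ m)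
    (hmin : ∀ ℓ ∈ m.primeFactors, ℓ = 2 ∨ p ≤ ℓ) (l : Fin n → ℤ)
    (hl : cyclotomic m (ZMod p) ∣ ∑ k : Fin n, C (l k : ZMod p) * X ^ (k : ℕ)) :
    (p : ℤ) ∣ ∑ k, l k * signSeq p m k := by
  set f : ℕ → ZMod p := fun j => signSeq p m j
  have hper : ∀ j, f (j + m) = f j := fun j => by simp only [f, signSeq, digitSignSeq_add_self]
  have hgeom : ∀ ℓ ∈ m.primeFactors, ∀ j, ∑ t ∈ range ℓ, f (j + t * (m / ℓ)) = 0 := by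
    intro ℓ hℓ j
    rw [← Int.cast_sum, ZMod.intCast_zmod_eq_zero_iff_dvd, signSeq,
      sum_digitSignSeq_add_mul_div _ _ hℓ]
    exact dvd_mul_of_dvd_left (dvd_sum_range_residueSign hp (Nat.prime_of_mem_primeFactors hℓ)
      (hmin ℓ hℓ)) _
  have hcyc : cyclotomic m (ZMod p) ∈ shiftAnnihilator f :=
    cyclotomic_mem_of_X_pow_sub_one_mem ((ZMod.natCast_eq_zero_iff _ _).not.2 hpm)
      (X_pow_sub_one_mem_shiftAnnihilator hper)
      fun ℓ hℓ => sum_X_pow_mem_shiftAnnihilator (hgeom ℓ hℓ)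
  obtain ⟨V, hV⟩ := hl
  have hzero := sum_mul_eq_zero_of_mem_shiftAnnihilator (hV ▸ Ideal.mul_mem_right V _ hcyc)
  rw [← ZMod.intCast_zmod_eq_zero_iff_dvd]
  push_cast
  exact hzero

theorem IsPrimitiveRoot.cyclotomic_dvd_of_aeval_eq_zero {K : Type*} [Field K] [CharZero K]
    {μ : K} {n : ℕ} (hμ : IsPrimitiveRoot μ n) (hn : n ≠ 0) {P : ℤ[X]} (h : aeval μ P = 0) :
    cyclotomic n ℤ ∣ P := by
  rw [cyclotomic_eq_minpoly hμ (Nat.pos_of_ne_zero hn)]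
  exact minpoly.isIntegrallyClosed_dvd (hμ.isIntegral (Nat.pos_of_ne_zero hn)) h

theorem cyclotomic_ordCompl_dvd_cyclotomic (p n : ℕ) [Fact p.Prime] (hpn : p ∣ n) (hn : n ≠ 0) :
    cyclotomic (ordCompl[p] n) (ZMod p) ∣ cyclotomic n (ZMod p) := by
  have hp := (Fact.out : p.Prime)
  have hk := hp.factorization_pos_of_dvd hn hpn
  conv_rhs => rw [← Nat.ordProj_mul_ordCompl_eq_self n p]
  rw [cyclotomic_mul_prime_pow_eq (ZMod p) (Nat.not_dvd_ordCompl hp hn) hk]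
  refine dvd_pow_self _ (Nat.sub_ne_zero_of_lt (Nat.pow_lt_pow_right hp.one_lt (by omega)))

theorem exists_int_eq_sum_mul_div {ι : Type*} [Fintype ι] {p : ℕ} (hp : Odd p) (l ε : ι → ℤ)
    (hε : ∀ i, ε i = 1 ∨ ε i = -1) (hdvd : (p : ℤ) ∣ ∑ i, l i * ε i) :
    ∃ z : ℤ, ∑ i, (l i : ℝ) * (((p : ℝ) + ε i) / (2 * p)) = z := by
  set K := ∑ i, l i * (p + ε i)
  have h2K : 2 ∣ K := dvd_sum fun i _ => dvd_mul_of_dvd_right (by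
    obtain ⟨a, rfl⟩ := hp
    rcases hε i with h | h <;> rw [h] <;> omega) _
  have hpK : (p : ℤ) ∣ K := by
    have hK : K = p * ∑ i, l i + ∑ i, l i * ε i := by
      simp only [K, mul_sum, ← sum_add_distrib]
      exact sum_congr rfl fun i _ => by ring
    rw [hK]
    exact dvd_add (dvd_mul_right _ _) hdvd
  have hcop : IsCoprime (2 : ℤ) p := by
    exact_mod_cast Nat.isCoprime_iff_coprime.2 (Nat.coprime_two_left.2 hp)
  obtain ⟨z, hz⟩ := hcop.mul_dvd h2K hpK
  refine ⟨z, ?_⟩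
  have hp0 : (p : ℝ) ≠ 0 := by exact_mod_cast hp.pos.ne'
  have hKR : (K : ℝ) = 2 * p * z := by exact_mod_cast hz
  calc ∑ i, (l i : ℝ) * (((p : ℝ) + ε i) / (2 * p)) = K / (2 * p) := by
        simp only [K, Int.cast_sum, Int.cast_mul, Int.cast_add, Int.cast_natCast, sum_div]
        exact sum_congr rfl fun i _ => by ring
    _ = z := by rw [hKR]; field_simp

theorem eq_two_or_le_of_eq_sInf {n p ℓ : ℕ} (hp : p = sInf {q : ℕ | q.Prime ∧ Odd q ∧ q ∣ n})
    (hℓ : ℓ.Prime) (hℓn : ℓ ∣ n) : ℓ = 2 ∨ p ≤ ℓ :=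
  or_iff_not_imp_left.2 fun h2 => hp ▸ Nat.sInf_le ⟨hℓ, hℓ.odd_of_ne_two h2, hℓn⟩

theorem stmt_10 (n : ℕ) (hn : 2 ≤ n) (hn2 : ¬ ∃ a : ℕ, n = 2 ^ a)
    (p : ℕ) (hp : p = sInf {q : ℕ | q.Prime ∧ Odd q ∧ q ∣ n}) :
    ∃ ξ : Fin n → ℝ,
      (∀ j, ξ j = ((p : ℝ) - 1) / (2 * p) ∨ ξ j = ((p : ℝ) + 1) / (2 * p)) ∧
      ∀ l : Fin n → ℤ,
        (∑ k : Fin n, (l k : ℂ) *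
          Complex.exp (2 * Real.pi * Complex.I / n) ^ (k : ℕ)) = 0 →
        ∃ z : ℤ, ∑ i, (l i : ℝ) * ξ i = z := by
  have hn0 : n ≠ 0 := by omega
  have hne : {q : ℕ | q.Prime ∧ Odd q ∧ q ∣ n}.Nonempty := by
    obtain ⟨q, hq, hqn, hqodd⟩ := (Nat.eq_two_pow_or_exists_odd_prime_and_dvd n).resolve_left hn2
    exact ⟨q, hq, hqodd, hqn⟩
  obtain ⟨hpp, hpodd, hpn⟩ : p.Prime ∧ Odd p ∧ p ∣ n := hp ▸ Nat.sInf_mem hne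
  have : Fact p.Prime := ⟨hpp⟩
  have hmin : ∀ ℓ ∈ (ordCompl[p] n).primeFactors, ℓ = 2 ∨ p ≤ ℓ := fun ℓ hℓ =>
    eq_two_or_le_of_eq_sInf hp (Nat.prime_of_mem_primeFactors hℓ)
      ((Nat.dvd_of_mem_primeFactors hℓ).trans (Nat.ordCompl_dvd n p))
  set ε := signSeq p (ordCompl[p] n)
  refine ⟨fun j => ((p : ℝ) + ε j) / (2 * p), fun j => ?_, fun l hl => ?_⟩
  · rcases signSeq_eq_one_or_eq_neg_one p (ordCompl[p] n) j with h | h <;>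
      simp [ε, h, sub_eq_add_neg]
  · have hL : cyclotomic n ℤ ∣ ∑ k : Fin n, C (l k) * X ^ (k : ℕ) :=
      (Complex.isPrimitiveRoot_exp n hn0).cyclotomic_dvd_of_aeval_eq_zero hn0 (by simpa using hl)
    have hLp := (cyclotomic_ordCompl_dvd_cyclotomic p n hpn hn0).trans
      (by simpa using map_dvd (mapRingHom (Int.castRingHom (ZMod p))) hL)
    exact exists_int_eq_sum_mul_div hpodd l (fun k => ε k)
      (fun k => signSeq_eq_one_or_eq_neg_one _ _ _)
      (dvd_sum_mul_signSeq hpodd (Nat.not_dvd_ordCompl hpp hn0) hmin l hLp)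
end

section
/- Let n ≥ 2, ω = e^(2πi/n), and define δₙ as the ℓ^∞-distance from (1/2)·𝟙ₙ to Eₙ = {x ∈ ℝⁿ : l·x ∈ ℤ whenever l ∈ ℤⁿ and ∑ lₖωᵏ = 0}. If m divides n, then δₘ ≤ δₙ. -/
lemma aux_sum_ite {α β R : Type*} [Fintype α] [Fintype β] [DecidableEq β]
    [NonAssocSemiring R] (e : α → β) (a : α → R) (g : β → R) :
    ∑ j, (∑ k, if e k = j then a k else 0) * g j = ∑ k, a k * g (e k) := by
  simp_rw [Finset.sum_mul, ite_mul, zero_mul]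
  rw [Finset.sum_comm]
  simp

theorem stmt_11 (n m : ℕ) (hm : 2 ≤ m) (hn : 2 ≤ n) (hmn : m ∣ n)
    (δ : ℕ → ℝ)
    (hδ : ∀ N : ℕ, δ N = Metric.infDist ((fun _ => (1/2 : ℝ)) : Fin N → ℝ)
      {x : Fin N → ℝ | ∀ l : Fin N → ℤ,
        (∑ k : Fin N, (l k : ℂ) *
          Complex.exp (2 * Real.pi * Complex.I * k / N)) = 0 →
        ∃ z : ℤ, ∑ i, (l i : ℝ) * x i = z}) :
    δ m ≤ δ n := by
  set d := n / m with hd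
  have hdpos : 0 < d := Nat.div_pos (Nat.le_of_dvd (by omega) hmn) (by omega)
  have hnd : n = m * d := (Nat.mul_div_cancel' hmn).symm
  -- embedding
  set e : Fin m → Fin n := fun k => ⟨k.val * d, by
    calc k.val * d < m * d := by
          exact Nat.mul_lt_mul_of_lt_of_le k.isLt le_rfl hdpos
    _ = n := hnd.symm⟩ with he
  have hexp : ∀ k : Fin m,
      Complex.exp (2 * Real.pi * Complex.I * (e k : Fin n) / n)
        = Complex.exp (2 * Real.pi * Complex.I * k / m) := by
    intro k
    congr 1
    have h1 : ((e k : Fin n) : ℂ) = (k : ℂ) * d := by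
      have h2 : ((e k : Fin n) : ℂ) = ((k.val * d : ℕ) : ℂ) := by norm_cast
      rw [h2]; push_cast; ring
    rw [h1, hnd]
    have hm0 : (m : ℂ) ≠ 0 := by exact_mod_cast (by omega : m ≠ 0)
    have hd0 : (d : ℂ) ≠ 0 := by exact_mod_cast hdpos.ne'
    push_cast
    field_simp
  rw [hδ m, hδ n]
  set En := {x : Fin n → ℝ | ∀ l : Fin n → ℤ,
        (∑ k : Fin n, (l k : ℂ) *
          Complex.exp (2 * Real.pi * Complex.I * k / n)) = 0 →
        ∃ z : ℤ, ∑ i, (l i : ℝ) * x i = z} with hEn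
  have hEnne : En.Nonempty := ⟨0, by intro l _; exact ⟨0, by simp⟩⟩
  rw [Metric.infDist_eq_iInf (s := En)]
  have : Nonempty En := hEnne.to_subtype
  refine le_ciInf ?_
  rintro ⟨x, hx⟩
  simp only [Subtype.coe_mk]
  -- build y ∈ Em
  set y : Fin m → ℝ := fun k => x (e k) with hy
  have hyE : y ∈ {x : Fin m → ℝ | ∀ l : Fin m → ℤ,
        (∑ k : Fin m, (l k : ℂ) *
          Complex.exp (2 * Real.pi * Complex.I * k / m)) = 0 →
        ∃ z : ℤ, ∑ i, (l i : ℝ) * x i = z} := by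
    intro l hl
    set l' : Fin n → ℤ := fun j => ∑ k, if e k = j then l k else 0 with hl'
    have key : (∑ j : Fin n, (l' j : ℂ) *
        Complex.exp (2 * Real.pi * Complex.I * j / n)) = 0 := by
      have : ∀ j : Fin n, (l' j : ℂ) = ∑ k, if e k = j then (l k : ℂ) else 0 := by
        intro j; simp [hl', apply_ite (Int.cast : ℤ → ℂ)]
      simp_rw [this]
      rw [aux_sum_ite]
      simp_rw [hexp]
      exact hl
    obtain ⟨z, hz⟩ := hx l' key
    refine ⟨z, ?_⟩
    rw [← hz]
    have : ∀ j : Fin n, (l' j : ℝ) = ∑ k, if e k = j then (l k : ℝ) else 0 := by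
      intro j; simp [hl', apply_ite (Int.cast : ℤ → ℝ)]
    simp_rw [this]
    rw [aux_sum_ite]
  calc Metric.infDist ((fun _ => (1/2 : ℝ)) : Fin m → ℝ) _
      ≤ dist ((fun _ => (1/2 : ℝ)) : Fin m → ℝ) y := Metric.infDist_le_dist_of_mem hyE
    _ ≤ dist ((fun _ => (1/2 : ℝ)) : Fin n → ℝ) x := by
        rw [dist_pi_le_iff dist_nonneg]
        intro k
        exact dist_le_pi_dist ((fun _ => (1/2 : ℝ)) : Fin n → ℝ) x (e k)
end

section
/- Let n not be a power of 2 and let p be its smallest odd prime divisor. Define polynomials Ψ₂(X) = X − 1, Ψ_p(X) = 1 + X + ⋯ + X^{p−1}, and for primes q | n with q > p, Ψ_q(X) = ∑_{i=0}^{(q+p)/2} X^i − ∑_{i=(q+p)/2+1}^{q−1} X^i. Let m be the squarefree part of n and T(X) = (∑_{j=0}^{n/m−1} X^j) · ∏_{q | n prime} Ψ_q(X^{n/q}). Then the remainder of T(X) upon division by Xⁿ − 1 has all n coefficients equal to ±1. -/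
/-!
Each `Ψ_q` is a polynomial of degree `< q` all of whose `q` coefficients are `±1`, so expanding the
product writes `T` as a sum of `n` monomials `±X^(j + ∑_q j_q (n/q))`. Since `n/q = (n/m)(m/q)`,
the exponent is `j + (n/m) k` with `k = ∑_q j_q (m/q)`; modulo `n = (n/m) m` it determines `j < n/m`
and `k mod m`, and by the Chinese remainder theorem `k mod m` determines every `j_q < q`. So the
exponents are pairwise incongruent modulo `n`, and reducing modulo `X^n - 1`, which sends `X^e` to
`X^(e mod n)`, leaves exactly one `±1` in each degree below `n`.
-/
open Polynomial Finset

namespace Polynomial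

variable {R : Type*} [CommRing R]

theorem X_pow_modByMonic_X_pow_sub_one [Nontrivial R] {n : ℕ} (hn : n ≠ 0) (e : ℕ) :
    (X ^ e : R[X]) %ₘ (X ^ n - 1) = X ^ (e % n) := by
  have hmonic : (X ^ n - 1 : R[X]).Monic := by simpa using monic_X_pow_sub_C (1 : R) hn
  have hdvd : (X ^ n - 1 : R[X]) ∣ X ^ e - X ^ (e % n) := by
    have : (X ^ e - X ^ (e % n) : R[X]) = ((X ^ n) ^ (e / n) - 1) * X ^ (e % n) := by
      rw [sub_mul, one_mul, ← pow_mul, ← pow_add, Nat.div_add_mod]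
    rw [this]
    exact (sub_one_dvd_pow_sub_one _ _).mul_right _
  rw [modByMonic_eq_of_dvd_sub hmonic hdvd, (modByMonic_eq_self_iff hmonic).2]
  rw [degree_X_pow, ← C_1, degree_X_pow_sub_C (Nat.pos_of_ne_zero hn)]
  exact_mod_cast Nat.mod_lt _ (Nat.pos_of_ne_zero hn)

theorem exists_coeff_sum_modByMonic_X_pow_sub_one [Nontrivial R] {ι : Type*} (s : Finset ι)
    (c : ι → R) (e : ι → ℕ) {n : ℕ} (hinj : Set.InjOn (fun i ↦ e i % n) s) (hcard : #s = n)
    {j : ℕ} (hj : j < n) :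
    ∃ i ∈ s, ((∑ i ∈ s, C (c i) * X ^ e i) %ₘ (X ^ n - 1)).coeff j = c i := by
  classical
  have hn : n ≠ 0 := by omega
  have himage : s.image (fun i ↦ e i % n) = range n :=
    eq_of_subset_of_card_le (fun _ h ↦ by
      obtain ⟨i, -, rfl⟩ := mem_image.1 h
      exact mem_range.2 (Nat.mod_lt _ (Nat.pos_of_ne_zero hn)))
      (by rw [card_range, card_image_of_injOn hinj, hcard])
  obtain ⟨i, hi, rfl⟩ := mem_image.1 (himage ▸ mem_range.2 hj)
  refine ⟨i, hi, ?_⟩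
  have hmod : (∑ i ∈ s, C (c i) * X ^ e i) %ₘ (X ^ n - 1) = ∑ i ∈ s, C (c i) * X ^ (e i % n) := by
    have := map_sum (modByMonicHom (X ^ n - 1 : R[X])) (fun i ↦ c i • X ^ e i) s
    simp only [modByMonicHom_apply, smul_modByMonic, X_pow_modByMonic_X_pow_sub_one hn] at this
    simpa only [smul_eq_C_mul] using this
  rw [hmod, finsetSum_coeff, sum_eq_single_of_mem i hi]
  · simp
  · intro i' hi' hne
    rw [coeff_C_mul_X_pow, if_neg fun h ↦ hne (hinj hi' hi h.symm)]

theorem prod_comp_X_pow_eq_sum_piFinset {ι : Type*} [Fintype ι] [DecidableEq ι]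
    (d e : ι → ℕ) (ε : ι → ℕ → R) :
    ∏ i, (∑ k ∈ range (d i), C (ε i k) * X ^ k).comp (X ^ e i) =
      ∑ f ∈ Fintype.piFinset fun i ↦ range (d i), C (∏ i, ε i (f i)) * X ^ ∑ i, f i * e i := by
  simp only [sum_comp, mul_comp, C_comp, X_pow_comp, ← pow_mul, prod_univ_sum]
  refine sum_congr rfl fun f _ ↦ ?_
  rw [prod_mul_distrib, ← map_prod, prod_pow_eq_pow_sum]
  simp only [mul_comm]

theorem geom_sum_X_mul_sum {ι : Type*} (a : ℕ) (s : Finset ι) (c : ι → R) (E : ι → ℕ) :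
    (∑ j ∈ range a, X ^ j) * ∑ f ∈ s, C (c f) * X ^ E f =
      ∑ x ∈ range a ×ˢ s, C (c x.2) * X ^ (x.1 + E x.2) := by
  rw [sum_mul_sum, sum_product]
  simp only [pow_add]
  exact sum_congr rfl fun _ _ ↦ sum_congr rfl fun _ _ ↦ by ring

theorem X_sub_one_eq_sum_range :
    (X - 1 : R[X]) = ∑ k ∈ range 2, C (if k = 0 then -1 else 1) * X ^ k := by
  simp [sum_range_succ, sub_eq_neg_add]

theorem sum_range_X_pow_sub_sum_Ico_eq {b d : ℕ} (hbd : b ≤ d) :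
    (∑ i ∈ range b, X ^ i : R[X]) - ∑ i ∈ Ico b d, X ^ i =
      ∑ k ∈ range d, C (if k < b then 1 else -1) * X ^ k := by
  rw [← sum_range_add_sum_Ico _ hbd, sub_eq_add_neg, ← sum_neg_distrib]
  congr 1
  · exact sum_congr rfl fun k hk ↦ by simp [mem_range.1 hk]
  · exact sum_congr rfl fun k hk ↦ by simp [not_lt.2 (mem_Ico.1 hk).1]

end Polynomial

namespace Nat

theorem eq_and_modEq_of_add_mul_mod_mul_eq {a b j j' k k' : ℕ} (hj : j < a) (hj' : j' < a)
    (h : (j + a * k) % (a * b) = (j' + a * k') % (a * b)) : j = j' ∧ k ≡ k' [MOD b] := by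
  have ha : 0 < a := by omega
  rw [Nat.mod_mul, Nat.mod_mul, Nat.add_mul_mod_self_left, Nat.add_mul_mod_self_left,
    Nat.add_mul_div_left _ _ ha, Nat.add_mul_div_left _ _ ha, Nat.mod_eq_of_lt hj,
    Nat.mod_eq_of_lt hj', Nat.div_eq_of_lt hj, Nat.div_eq_of_lt hj', zero_add, zero_add] at h
  have hjj : j = j' := by
    simpa [Nat.mod_eq_of_lt hj, Nat.mod_eq_of_lt hj'] using congrArg (· % a) h
  subst hjj
  exact ⟨rfl, Nat.eq_of_mul_eq_mul_left ha (Nat.add_left_cancel h)⟩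

section ChineseRemainder

variable {ι : Type*} [Fintype ι] [DecidableEq ι]

theorem sum_mul_prod_erase_modEq (q f : ι → ℕ) (i : ι) :
    ∑ j, f j * ∏ k ∈ univ.erase j, q k ≡ f i * ∏ k ∈ univ.erase i, q k [MOD q i] := by
  rw [← add_sum_erase _ _ (mem_univ i)]
  have hrest : ∑ j ∈ univ.erase i, f j * ∏ k ∈ univ.erase j, q k ≡ 0 [MOD q i] :=
    Nat.modEq_zero_iff_dvd.2 <| dvd_sum fun j hj ↦ Dvd.dvd.mul_left
      (dvd_prod_of_mem q (mem_erase.2 ⟨(ne_of_mem_erase hj).symm, mem_univ i⟩)) _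
  simpa using hrest.add_left (f i * ∏ k ∈ univ.erase i, q k)

theorem injOn_sum_mul_prod_erase_mod {q : ι → ℕ} (hq : Pairwise fun i j ↦ (q i).Coprime (q j)) :
    Set.InjOn (fun f : ι → ℕ ↦ (∑ i, f i * ∏ j ∈ univ.erase i, q j) % ∏ i, q i)
      (Fintype.piFinset fun i ↦ range (q i)) := by
  intro f hf g hg h
  funext i
  have hmod : f i * ∏ j ∈ univ.erase i, q j ≡ g i * ∏ j ∈ univ.erase i, q j [MOD q i] :=
    (sum_mul_prod_erase_modEq q f i).symm.trans
      ((Nat.ModEq.of_dvd (dvd_prod_of_mem q (mem_univ i)) h).trans (sum_mul_prod_erase_modEq q g i))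
  have hcop : (q i).Coprime (∏ j ∈ univ.erase i, q j) :=
    Nat.Coprime.prod_right fun j hj ↦ hq (ne_of_mem_erase hj).symm
  exact (hmod.cancel_right_of_coprime hcop).eq_of_lt_of_lt
    (mem_range.1 (Fintype.mem_piFinset.1 hf i)) (mem_range.1 (Fintype.mem_piFinset.1 hg i))

end ChineseRemainder

theorem injOn_add_sum_mul_div_primeFactors_mod (n : ℕ) :
    Set.InjOn
      (fun x : ℕ × (n.primeFactors → ℕ) ↦ (x.1 + ∑ q : n.primeFactors, x.2 q * (n / q)) % n)
      ↑(range (n / ∏ q ∈ n.primeFactors, q) ×ˢ Fintype.piFinset fun q : n.primeFactors ↦ range q :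
        Finset _) := by
  classical
  set a := n / ∏ q ∈ n.primeFactors, q
  have hna : n = a * ∏ q : n.primeFactors, (q : ℕ) := by
    rw [prod_coe_sort n.primeFactors fun q ↦ q, Nat.div_mul_cancel (Nat.prod_primeFactors_dvd n)]
  have hdiv (q : n.primeFactors) : n / q = a * ∏ r ∈ univ.erase q, (r : ℕ) := by
    refine Nat.div_eq_of_eq_mul_left (Nat.prime_of_mem_primeFactors q.2).pos ?_
    have := hna
    rw [← mul_prod_erase univ (fun r : n.primeFactors ↦ (r : ℕ)) (mem_univ q)] at this
    exact this.trans (by ring)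
  have hexp (x : ℕ × (n.primeFactors → ℕ)) :
      (x.1 + ∑ q : n.primeFactors, x.2 q * (n / q)) % n =
        (x.1 + a * ∑ q, x.2 q * ∏ r ∈ univ.erase q, (r : ℕ)) %
          (a * ∏ q : n.primeFactors, (q : ℕ)) := by
    simp only [hdiv, mul_sum]
    rw [← hna]
    congr 2
    exact sum_congr rfl fun _ _ ↦ by ring
  have hcop : Pairwise fun q r : n.primeFactors ↦ (q : ℕ).Coprime r := fun q r hqr ↦
    (Nat.coprime_primes (Nat.prime_of_mem_primeFactors q.2) (Nat.prime_of_mem_primeFactors r.2)).2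
      (Subtype.coe_injective.ne hqr)
  rintro ⟨j, f⟩ hx ⟨j', g⟩ hy h
  simp only [mem_coe, mem_product, mem_range] at hx hy
  obtain ⟨rfl, hfg⟩ := eq_and_modEq_of_add_mul_mod_mul_eq hx.1 hy.1
    ((hexp (j, f)).symm.trans (h.trans (hexp (j', g))))
  rw [injOn_sum_mul_prod_erase_mod hcop hx.2 hy.2 hfg]

end Nat

theorem exists_isUnit_eq_sum_range {n p : ℕ} (hp : p = sInf {q : ℕ | q.Prime ∧ Odd q ∧ q ∣ n})
    {Ψ : ℕ → ℤ[X]} (hΨ2 : Ψ 2 = X - 1) (hΨp : Ψ p = ∑ i ∈ range p, X ^ i)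
    (hΨq : ∀ q : ℕ, q.Prime → q ∣ n → p < q →
      Ψ q = (∑ i ∈ range ((q + p) / 2 + 1), X ^ i) - ∑ i ∈ Ico ((q + p) / 2 + 1) q, X ^ i)
    {q : ℕ} (hq : q ∈ n.primeFactors) :
    ∃ ε : ℕ → ℤ, (∀ k, IsUnit (ε k)) ∧ Ψ q = ∑ k ∈ range q, C (ε k) * X ^ k := by
  obtain ⟨hq_prime, hqn, -⟩ := Nat.mem_primeFactors.1 hq
  by_cases hq2 : q = 2
  · subst hq2
    exact ⟨_, fun k ↦ by split_ifs <;> simp, hΨ2.trans X_sub_one_eq_sum_range⟩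
  by_cases hqp : q = p
  · subst hqp
    exact ⟨1, fun _ ↦ isUnit_one, by simp [hΨp]⟩
  have hpq : p < q := lt_of_le_of_ne
    (hp ▸ Nat.sInf_le ⟨hq_prime, hq_prime.odd_of_ne_two hq2, hqn⟩) (Ne.symm hqp)
  refine ⟨fun k ↦ if k < (q + p) / 2 + 1 then 1 else -1,
    fun k ↦ by dsimp only; split_ifs <;> simp, ?_⟩
  rw [hΨq q hq_prime hqn hpq, sum_range_X_pow_sub_sum_Ico_eq (by omega)]

open Polynomial in
theorem stmt_15_general (n : ℕ)
    (p : ℕ) (hp : p = sInf {q : ℕ | q.Prime ∧ Odd q ∧ q ∣ n})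
    (m : ℕ) (hm : m = n.primeFactors.prod id)
    (Ψ : ℕ → Polynomial ℤ)
    (hΨ2 : Ψ 2 = X - 1)
    (hΨp : Ψ p = ∑ i ∈ Finset.range p, X ^ i)
    (hΨq : ∀ q : ℕ, q.Prime → q ∣ n → p < q →
      Ψ q = (∑ i ∈ Finset.range ((q + p) / 2 + 1), X ^ i) -
            ∑ i ∈ Finset.Ico ((q + p) / 2 + 1) q, X ^ i)
    (T : Polynomial ℤ)
    (hT : T = (∑ j ∈ Finset.range (n / m), X ^ j) *
      ∏ q ∈ n.primeFactors, (Ψ q).comp (X ^ (n / q))) :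
    ∀ j < n, (T %ₘ (X ^ n - 1)).coeff j = 1 ∨ (T %ₘ (X ^ n - 1)).coeff j = -1 := by
  classical
  intro j hj
  choose ε hε hΨε using fun q : n.primeFactors ↦ exists_isUnit_eq_sum_range hp hΨ2 hΨp hΨq q.2
  have hm' : m = ∏ q ∈ n.primeFactors, q := hm
  have hTsum : T = ∑ x ∈ range (n / m) ×ˢ Fintype.piFinset (fun q : n.primeFactors ↦ range q),
      C (∏ q, ε q (x.2 q)) * X ^ (x.1 + ∑ q : n.primeFactors, x.2 q * (n / q)) := by
    rw [hT, ← prod_coe_sort n.primeFactors fun q ↦ (Ψ q).comp (X ^ (n / q))]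
    simp only [hΨε]
    rw [prod_comp_X_pow_eq_sum_piFinset (fun q : n.primeFactors ↦ q) (fun q ↦ n / q) ε,
      geom_sum_X_mul_sum]
  have hcard : #(range (n / m) ×ˢ Fintype.piFinset (fun q : n.primeFactors ↦ range q)) = n := by
    simp only [card_product, card_range, Fintype.card_piFinset, hm',
      prod_coe_sort n.primeFactors fun q ↦ q]
    exact Nat.div_mul_cancel (Nat.prod_primeFactors_dvd n)
  obtain ⟨x, -, hx⟩ := exists_coeff_sum_modByMonic_X_pow_sub_one _ (fun x ↦ ∏ q, ε q (x.2 q)) _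
    (hm' ▸ Nat.injOn_add_sum_mul_div_primeFactors_mod n) hcard hj
  rw [hTsum, hx]
  exact Int.isUnit_iff.1 (IsUnit.prod_univ_iff.2 fun q ↦ hε q _)

open Polynomial in
theorem stmt_15 (n : ℕ) (hn : 2 ≤ n) (hn2 : ¬ ∃ a : ℕ, n = 2 ^ a)
    (p : ℕ) (hp : p = sInf {q : ℕ | q.Prime ∧ Odd q ∧ q ∣ n})
    (m : ℕ) (hm : m = n.primeFactors.prod id)
    (Ψ : ℕ → Polynomial ℤ)
    (hΨ2 : Ψ 2 = X - 1)
    (hΨp : Ψ p = ∑ i ∈ Finset.range p, X ^ i)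
    (hΨq : ∀ q : ℕ, q.Prime → q ∣ n → p < q →
      Ψ q = (∑ i ∈ Finset.range ((q + p) / 2 + 1), X ^ i) -
            ∑ i ∈ Finset.Ico ((q + p) / 2 + 1) q, X ^ i)
    (T : Polynomial ℤ)
    (hT : T = (∑ j ∈ Finset.range (n / m), X ^ j) *
      ∏ q ∈ n.primeFactors, (Ψ q).comp (X ^ (n / q))) :
    ∀ j < n, (T %ₘ (X ^ n - 1)).coeff j = 1 ∨ (T %ₘ (X ^ n - 1)).coeff j = -1 :=
  stmt_15_general n p hp m hm Ψ hΨ2 hΨp hΨq T hT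
end

section
/- Let n be a positive integer with prime divisors q₁ < ⋯ < q_r and squarefree part m = q₁⋯q_r. Then the n integers j + ∑_{t=1}^r j_t·(n/q_t), where 0 ≤ j ≤ n/m − 1 and 0 ≤ j_t ≤ q_t − 1, are pairwise incongruent modulo n. -/
theorem stmt_16 (n : ℕ) (hn : 0 < n) (m : ℕ) (hm : m = n.primeFactors.prod id)
    (j j' : ℕ) (hj : j < n / m) (hj' : j' < n / m)
    (f f' : ℕ → ℕ)
    (hf : ∀ q ∈ n.primeFactors, f q < q) (hf' : ∀ q ∈ n.primeFactors, f' q < q)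
    (h : (j + ∑ q ∈ n.primeFactors, f q * (n / q)) ≡
         (j' + ∑ q ∈ n.primeFactors, f' q * (n / q)) [MOD n]) :
    j = j' ∧ ∀ q ∈ n.primeFactors, f q = f' q := by
  have hn0 : n ≠ 0 := hn.ne'
  -- the divisibility from the congruence, in ℤ
  have hdvd : (n : ℤ) ∣ ((j' : ℤ) - j) +
      ∑ q ∈ n.primeFactors, ((f' q : ℤ) - f q) * ((n / q : ℕ) : ℤ) := by
    have hd := (Nat.modEq_iff_dvd).mp h
    simp only [Nat.cast_add, Finset.sum_sub_distrib, Nat.cast_sum, Nat.cast_mul] at hd ⊢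
    convert hd using 1
    simp only [sub_mul, Finset.sum_sub_distrib]
    ring
  -- per-prime divisibility
  have key : ∀ q ∈ n.primeFactors, ((q : ℤ) ^ (n.factorization q)) ∣
      ((j' : ℤ) - j) + ((f' q : ℤ) - f q) * ((n / q : ℕ) : ℤ) := by
    intro q hq
    have hqn : q ^ n.factorization q ∣ n := Nat.ordProj_dvd n q
    have h1 : ((q : ℤ) ^ (n.factorization q)) ∣
        ∑ p ∈ n.primeFactors.erase q, ((f' p : ℤ) - f p) * ((n / p : ℕ) : ℤ) := by
      apply Finset.dvd_sum
      intro p hp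
      have hpq : p ≠ q := Finset.ne_of_mem_erase hp
      have hpm : p ∈ n.primeFactors := Finset.mem_of_mem_erase hp
      have hdd : q ^ n.factorization q ∣ n / p := by
        have hpd : p ∣ n := Nat.dvd_of_mem_primeFactors hpm
        have hco : Nat.Coprime (q ^ n.factorization q) p :=
          Nat.Coprime.pow_left _
            (((Nat.coprime_primes (Nat.prime_of_mem_primeFactors hq)
              (Nat.prime_of_mem_primeFactors hpm)).mpr hpq.symm))
        refine hco.dvd_of_dvd_mul_left ?_
        rw [Nat.mul_div_cancel' hpd]
        exact hqn
      exact Dvd.dvd.mul_left (by exact_mod_cast Int.natCast_dvd_natCast.mpr hdd) _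
    have h2 := hdvd
    rw [← Finset.add_sum_erase _ _ hq] at h2
    have hqnZ : ((q : ℤ) ^ (n.factorization q)) ∣ (n : ℤ) := by
      exact_mod_cast Int.natCast_dvd_natCast.mpr hqn
    have h3 := dvd_sub (hqnZ.trans h2) h1
    convert h3 using 1
    · rfl
    ring
  -- n / q = q^(a-1) * (n / q^a)
  have hnq : ∀ q ∈ n.primeFactors,
      n / q = q ^ (n.factorization q - 1) * (n / q ^ n.factorization q) := by
    intro q hq
    have hp := Nat.prime_of_mem_primeFactors hq
    have ha : 1 ≤ n.factorization q :=
      hp.factorization_pos_of_dvd hn0 (Nat.dvd_of_mem_primeFactors hq)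
    have hself := Nat.ordProj_mul_ordCompl_eq_self n q
    refine Nat.div_eq_of_eq_mul_left hp.pos ?_
    rw [mul_assoc, mul_comm (n / q ^ n.factorization q) q, ← mul_assoc, ← pow_succ,
      Nat.sub_add_cancel ha]
    exact hself.symm
  -- each q^(a-1) divides j' - j
  have hP : ∀ q ∈ n.primeFactors, ((q : ℤ) ^ (n.factorization q - 1)) ∣ ((j' : ℤ) - j) := by
    intro q hq
    have d1 : ((q : ℤ) ^ (n.factorization q - 1)) ∣ (q : ℤ) ^ (n.factorization q) :=
      pow_dvd_pow _ (Nat.sub_le _ _)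
    have d2 : ((q : ℤ) ^ (n.factorization q - 1)) ∣ ((f' q : ℤ) - f q) * ((n / q : ℕ) : ℤ) := by
      apply Dvd.dvd.mul_left
      rw [hnq q hq]
      push_cast
      exact Dvd.dvd.mul_right dvd_rfl _
    have h3 := dvd_sub (d1.trans (key q hq)) d2
    simpa using h3
  -- n / m equals the product of q^(a-1)
  have hmn : m * ∏ q ∈ n.primeFactors, q ^ (n.factorization q - 1) = n := by
    rw [hm, Finset.prod_mul_distrib.symm]
    have heq : ∀ q ∈ n.primeFactors, id q * q ^ (n.factorization q - 1) = q ^ n.factorization q := by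
      intro q hq
      have hp := Nat.prime_of_mem_primeFactors hq
      have ha : 1 ≤ n.factorization q :=
        hp.factorization_pos_of_dvd hn0 (Nat.dvd_of_mem_primeFactors hq)
      simp only [id]
      rw [← pow_succ', Nat.sub_add_cancel ha]
    rw [Finset.prod_congr rfl heq, ← Nat.support_factorization]
    exact Nat.factorization_prod_pow_eq_self hn0
  have hdivnm : n / m = ∏ q ∈ n.primeFactors, q ^ (n.factorization q - 1) := by
    have hm0 : 0 < m := by
      rw [hm]
      exact Finset.prod_pos fun q hq => (Nat.prime_of_mem_primeFactors hq).pos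
    exact Nat.div_eq_of_eq_mul_left hm0 (by rw [mul_comm] at hmn; exact hmn.symm)
  -- product divides j' - j
  have hProd : ((∏ q ∈ n.primeFactors, q ^ (n.factorization q - 1) : ℕ) : ℤ) ∣ ((j' : ℤ) - j) := by
    push_cast
    apply Finset.prod_dvd_of_coprime _ hP
    intro p hp q hq hpq
    apply IsCoprime.pow
    rw [Nat.isCoprime_iff_coprime]
    exact (Nat.coprime_primes (Nat.prime_of_mem_primeFactors hp)
      (Nat.prime_of_mem_primeFactors hq)).mpr hpq
  have hjj : j = j' := by
    have habs : |(j' : ℤ) - j| < ((∏ q ∈ n.primeFactors, q ^ (n.factorization q - 1) : ℕ) : ℤ) := by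
      rw [← hdivnm, abs_sub_lt_iff]
      omega
    have h0 := Int.eq_zero_of_abs_lt_dvd hProd habs
    omega
  refine ⟨hjj, ?_⟩
  intro q hq
  have hp := Nat.prime_of_mem_primeFactors hq
  have ha : 1 ≤ n.factorization q :=
    hp.factorization_pos_of_dvd hn0 (Nat.dvd_of_mem_primeFactors hq)
  have hk := key q hq
  rw [hjj] at hk
  simp only [sub_self, zero_add] at hk
  rw [hnq q hq] at hk
  simp only [Nat.cast_mul, Nat.cast_pow] at hk
  have hq0 : ((q : ℤ) ^ (n.factorization q - 1)) ≠ 0 :=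
    pow_ne_zero _ (by exact_mod_cast hp.pos.ne')
  have hk2 : (q : ℤ) ∣ ((f' q : ℤ) - f q) * ((n / q ^ n.factorization q : ℕ) : ℤ) := by
    have hpow : (q : ℤ) ^ (n.factorization q) =
        (q : ℤ) ^ (n.factorization q - 1) * q := by
      rw [← pow_succ, Nat.sub_add_cancel ha]
    rw [hpow] at hk
    have hk' : (q : ℤ) ^ (n.factorization q - 1) * (q : ℤ) ∣
        (q : ℤ) ^ (n.factorization q - 1) *
          (((f' q : ℤ) - f q) * ((n / q ^ n.factorization q : ℕ) : ℤ)) := by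
      convert hk using 1
      ring
    exact (mul_dvd_mul_iff_left hq0).mp hk'
  have hcop : IsCoprime ((q : ℤ)) ((n / q ^ n.factorization q : ℕ) : ℤ) := by
    rw [Nat.isCoprime_iff_coprime]
    exact Nat.coprime_ordCompl hp hn0
  have hk3 : (q : ℤ) ∣ ((f' q : ℤ) - f q) := hcop.dvd_of_dvd_mul_right hk2
  have h1 := hf q hq
  have h2 := hf' q hq
  have h0 : ((f' q : ℤ) - f q) = 0 := by
    apply Int.eq_zero_of_abs_lt_dvd hk3
    rw [abs_sub_lt_iff]
    omega
  omega
end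

section
/- Let θ₁,…,θₙ be complex numbers of modulus 1, let Λ = {l ∈ ℤⁿ : ∑ lₖθₖ = 0}, E = {x ∈ ℝⁿ : l·x ∈ ℤ for all l ∈ Λ}, and δ the ℓ^∞-distance from (1/2)𝟙 to E. Then for 0 < ε < 1/2, there exists X ∈ ℂ with {Re(X·θₖ)} ∈ (ε, 1−ε) for all k if and only if ε < 1/2 − δ. -/
/-!
The condition on `X` says that some point of `A = {(Re (X θₖ))ₖ : X ∈ ℂ} + ℤⁿ` lies within
`1/2 - ε` of `(1/2)𝟙` in the sup distance, i.e. `infDist ((1/2)𝟙) A < 1/2 - ε`. As `infDist` does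
not see closures, it remains to prove Kronecker's theorem `closure A = E`. A closed subgroup `G`
of a finite-dimensional real space is the sum of its largest subspace and a discrete group (small
elements of `G` in a complement would, after normalisation, converge to a direction contained in
`G`), and a discrete group is a lattice in its span; so a point outside `G` is separated from `G`
by a linear functional taking integer values on `G`. A functional integral on `A` is
`x ↦ ∑ lₖ xₖ` with `l ∈ ℤⁿ`, and it vanishes on the subspace `{(Re (X θₖ))ₖ}`, which says exactly
`∑ lₖ θₖ = 0`; so it is integral on `E` as well.
-/

open Filter Topology Metric Module Submodule

theorem one_half_ne_intCast (m : ℤ) : (1 / 2 : ℝ) ≠ m := by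
  intro h
  have : (2 * m : ℤ) = 1 := by exact_mod_cast (by push_cast; linarith : ((2 * m : ℤ) : ℝ) = 1)
  omega

theorem Module.Dual.eq_zero_of_forall_exists_intCast {V : Type*} [AddCommGroup V] [Module ℝ V]
    (f : Module.Dual ℝ V) (hf : ∀ v, ∃ m : ℤ, f v = m) : f = 0 := by
  ext v
  by_contra hv
  rw [LinearMap.zero_apply] at hv
  obtain ⟨m, hm⟩ := hf ((2 * f v)⁻¹ • v)
  rw [map_smul, smul_eq_mul] at hm
  exact one_half_ne_intCast m (by rw [← hm]; field_simp)

variable {E : Type*} [NormedAddCommGroup E] [NormedSpace ℝ E]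

section FiniteDimensional

variable [FiniteDimensional ℝ E]

theorem ZLattice.exists_dual_int_of_notMem (L : Submodule ℤ E) [DiscreteTopology L]
    [IsZLattice ℝ L] {x : E} (hx : x ∉ L) :
    ∃ f : Module.Dual ℝ E, (∀ y ∈ L, ∃ m : ℤ, f y = m) ∧ ∀ m : ℤ, f x ≠ m := by
  set b₀ := Module.Free.chooseBasis ℤ L
  set b := b₀.ofZLatticeBasis ℝ L
  obtain ⟨i, hi⟩ : ∃ i, ∀ m : ℤ, b.repr x i ≠ m := by
    by_contra! h
    choose m hm using h
    refine hx (b.sum_repr x ▸ sum_mem fun i _ => ?_)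
    rw [hm i, Int.cast_smul_eq_zsmul, Basis.ofZLatticeBasis_apply]
    exact zsmul_mem (b₀ i).2 _
  exact ⟨b.coord i, fun y hy => ⟨_, b₀.ofZLatticeBasis_repr_apply ℝ L ⟨y, hy⟩ i⟩, hi⟩

theorem Submodule.exists_dual_int_of_notMem_of_discrete (L : Submodule ℤ E)
    [DiscreteTopology L] {x : E} (hx : x ∉ L) :
    ∃ f : Module.Dual ℝ E, (∀ y ∈ L, ∃ m : ℤ, f y = m) ∧ ∀ m : ℤ, f x ≠ m := by
  set S := span ℝ (L : Set E)
  by_cases hxS : x ∈ S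
  · let L₀ := L.comap (S.subtype.restrictScalars ℤ)
    have : DiscreteTopology L₀ := .preimage_of_continuous_injective (L : Set E)
      (LinearMap.continuous_of_finiteDimensional S.subtype) (injective_subtype _)
    have : IsZLattice ℝ L₀ := ⟨span_span_coe_preimage⟩
    obtain ⟨f₀, hf₀L, hf₀x⟩ := ZLattice.exists_dual_int_of_notMem L₀ (x := ⟨x, hxS⟩) hx
    obtain ⟨f, hf⟩ := LinearMap.exists_extend f₀
    have hfS : ∀ y (hy : y ∈ S), f y = f₀ ⟨y, hy⟩ := fun y hy => congr($hf ⟨y, hy⟩)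
    exact ⟨f, fun y hy => hfS y (subset_span hy) ▸ hf₀L _ hy, hfS x hxS ▸ hf₀x⟩
  · obtain ⟨f, hfS, hfx⟩ := LinearMap.exists_extend_of_notMem (0 : S →ₗ[ℝ] ℝ) hxS (1 / 2)
    exact ⟨f, fun y hy => ⟨0, by simpa using congr($hfS ⟨y, subset_span hy⟩)⟩,
      hfx ▸ one_half_ne_intCast⟩

end FiniteDimensional

namespace AddSubgroup

def linealSpace (G : AddSubgroup E) : Submodule ℝ E where
  carrier := {y | ∀ t : ℝ, t • y ∈ G}
  add_mem' ha hb t := by simpa only [smul_add] using G.add_mem (ha t) (hb t)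
  zero_mem' t := by simpa only [smul_zero] using G.zero_mem
  smul_mem' c _ hy t := by simpa only [smul_smul] using hy (t * c)

variable {G : AddSubgroup E}

theorem mem_of_mem_linealSpace {y : E} (hy : y ∈ G.linealSpace) : y ∈ G := by
  simpa using hy 1

theorem mem_linealSpace_of_tendsto {α : Type*} {l : Filter α} [l.NeBot]
    (hG : IsClosed (G : Set E)) {y : α → E} (hyG : ∀ j, y j ∈ G) (hy0 : ∀ j, y j ≠ 0)
    (hy : Tendsto (fun j => ‖y j‖) l (𝓝 0)) {z : E}
    (hz : Tendsto (fun j => ‖y j‖⁻¹ • y j) l (𝓝 z)) : z ∈ G.linealSpace := by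
  intro t
  -- `t • z` is the limit of the multiples `⌊t / ‖y j‖⌋ • y j ∈ G`.
  set c : α → ℝ := fun j => ⌊t / ‖y j‖⌋ * ‖y j‖
  have hpos : ∀ j, 0 < ‖y j‖ := fun j => norm_pos_iff.2 (hy0 j)
  have hc : Tendsto c l (𝓝 t) := by
    refine tendsto_of_tendsto_of_tendsto_of_le_of_le (g := fun j => t - ‖y j‖)
      (by simpa using tendsto_const_nhds.sub hy) tendsto_const_nhds (fun j => ?_)
      (fun j => (le_div_iff₀ (hpos j)).1 (Int.floor_le _))
    have := (div_lt_iff₀ (hpos j)).1 (Int.lt_floor_add_one (t / ‖y j‖))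
    simp only [c]
    linarith
  refine hG.mem_of_tendsto (hc.smul hz) (Eventually.of_forall fun j => ?_)
  rw [smul_smul, mul_assoc, mul_inv_cancel₀ (hpos j).ne', mul_one, Int.cast_smul_eq_zsmul]
  exact zsmul_mem (hyG j) _

variable [FiniteDimensional ℝ E]

theorem exists_pos_le_norm_of_isCompl (hG : IsClosed (G : Set E)) {W : Submodule ℝ E}
    (hW : IsCompl G.linealSpace W) : ∃ r > 0, ∀ y ∈ G, y ∈ W → y ≠ 0 → r ≤ ‖y‖ := by
  by_contra! h
  choose y hyG hyW hy0 hyr using fun j : ℕ => h (1 / (j + 1)) Nat.one_div_pos_of_nat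
  have hys : ∀ j, ‖y j‖⁻¹ • y j ∈ sphere (0 : E) 1 := fun j => by simp [norm_smul, hy0 j]
  obtain ⟨z, hz, φ, hφ, hzlim⟩ := (isCompact_sphere (0 : E) 1).tendsto_subseq hys
  have hy : Tendsto (fun j => ‖y (φ j)‖) atTop (𝓝 0) :=
    squeeze_zero (fun _ => norm_nonneg _) (fun j => (hyr (φ j)).le)
      (tendsto_one_div_add_atTop_nhds_zero_nat.comp hφ.tendsto_atTop)
  have hzG : z ∈ G.linealSpace :=
    mem_linealSpace_of_tendsto hG (fun j => hyG (φ j)) (fun j => hy0 _) hy hzlim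
  have hzW : z ∈ W := W.closed_of_finiteDimensional.mem_of_tendsto hzlim
    (Eventually.of_forall fun j => W.smul_mem _ (hyW _))
  have : z = 0 := Submodule.disjoint_def.1 hW.disjoint z hzG hzW
  simp [this] at hz

theorem exists_dual_int_of_notMem (hG : IsClosed (G : Set E)) {x : E} (hx : x ∉ G) :
    ∃ f : Module.Dual ℝ E, (∀ y ∈ G, ∃ m : ℤ, f y = m) ∧ ∀ m : ℤ, f x ≠ m := by
  -- `G = linealSpace G + (G ∩ W)` with `G ∩ W` discrete: project along `linealSpace G`.
  obtain ⟨W, hW⟩ := G.linealSpace.exists_isCompl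
  obtain ⟨r, hr, hrW⟩ := exists_pos_le_norm_of_isCompl hG hW
  let Λ := (G ⊓ W.toAddSubgroup).toIntSubmodule
  have : DiscreteTopology Λ :=
    .of_forall_le_norm hr fun y hy => hrW y y.2.1 y.2.2 (by simpa using hy)
  let π := W.projection G.linealSpace hW.symm
  have hsub : ∀ y, y - π y ∈ G := fun y => mem_of_mem_linealSpace (sub_projection_mem _ y)
  have hπ : ∀ y ∈ G, π y ∈ Λ := fun y hy =>
    ⟨by simpa using G.sub_mem hy (hsub y), projection_apply_mem _ _⟩
  have hπx : π x ∉ Λ := fun h => hx (by simpa using G.add_mem h.1 (hsub x))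
  obtain ⟨f, hfΛ, hfx⟩ := Λ.exists_dual_int_of_notMem_of_discrete hπx
  exact ⟨f ∘ₗ π, fun y hy => hfΛ _ (hπ y hy), hfx⟩

end AddSubgroup

theorem Complex.eq_zero_of_forall_re_mul_eq_zero {z : ℂ} (h : ∀ X : ℂ, (X * z).re = 0) :
    z = 0 := by
  have := h (starRingEnd ℂ z)
  rwa [mul_comm, Complex.mul_conj, Complex.ofReal_re, Complex.normSq_eq_zero] at this

theorem Int.fract_mem_Ioo_iff_exists_dist_lt {ε : ℝ} (hε : 0 ≤ ε) (y : ℝ) :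
    Int.fract y ∈ Set.Ioo ε (1 - ε) ↔ ∃ m : ℤ, dist (1 / 2) (y + m) < 1 / 2 - ε := by
  constructor
  · rintro ⟨h₁, h₂⟩
    refine ⟨-⌊y⌋, ?_⟩
    rw [← Int.self_sub_floor] at h₁ h₂
    rw [Real.dist_eq, abs_lt]
    push_cast
    constructor <;> linarith
  · rintro ⟨m, hm⟩
    rw [Real.dist_eq, abs_lt] at hm
    have hfloor : ⌊y⌋ = -m := by
      rw [Int.floor_eq_iff]
      push_cast
      constructor <;> linarith
    rw [← Int.self_sub_floor, hfloor]
    push_cast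
    constructor <;> linarith

section Kronecker

variable {ι : Type*} (θ : ι → ℂ)

noncomputable def reMap : ℂ →ₗ[ℝ] ι → ℝ :=
  LinearMap.pi fun k => Complex.reLm ∘ₗ LinearMap.mulRight ℝ (θ k)

@[simp]
theorem reMap_apply (X : ℂ) (k : ι) : reMap θ X k = (X * θ k).re := rfl

noncomputable def kroneckerGroup : AddSubgroup (ι → ℝ) :=
  (reMap θ).range.toAddSubgroup ⊔ ((Int.castAddHom ℝ).compLeft ι).range

theorem mem_kroneckerGroup {y : ι → ℝ} :
    y ∈ kroneckerGroup θ ↔ ∃ (X : ℂ) (m : ι → ℤ), reMap θ X + (fun k => (m k : ℝ)) = y := by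
  simp only [kroneckerGroup, AddSubgroup.mem_sup, AddSubgroup.mem_mk, mem_toAddSubmonoid,
    LinearMap.mem_range, AddMonoidHom.mem_range, exists_exists_eq_and]
  rfl

variable [Fintype ι]

theorem sum_mul_reMap_apply (l : ι → ℤ) (X : ℂ) :
    ∑ k, (l k : ℝ) * reMap θ X k = (X * ∑ k, (l k : ℂ) * θ k).re := by
  simp only [Finset.mul_sum, Complex.re_sum, reMap_apply]
  refine Finset.sum_congr rfl fun k _ => ?_
  rw [mul_left_comm, ← Complex.ofReal_intCast, Complex.re_ofReal_mul]

/-- The set `E` of the statement, dual to the relation lattice `Λ = {l ∈ ℤ^ι : ∑ lₖ θₖ = 0}`. -/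
def relationDual : AddSubgroup (ι → ℝ) where
  carrier := {x | ∀ l : ι → ℤ, ∑ k, (l k : ℂ) * θ k = 0 → ∃ z : ℤ, ∑ k, (l k : ℝ) * x k = z}
  add_mem' {x y} hx hy l hl := by
    obtain ⟨a, ha⟩ := hx l hl
    obtain ⟨b, hb⟩ := hy l hl
    exact ⟨a + b, by simp [mul_add, Finset.sum_add_distrib, ha, hb]⟩
  zero_mem' l _ := ⟨0, by simp⟩
  neg_mem' {x} hx l hl := by
    obtain ⟨a, ha⟩ := hx l hl
    exact ⟨-a, by simp [ha]⟩

theorem isClosed_relationDual : IsClosed (relationDual θ : Set (ι → ℝ)) := by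
  have : (relationDual θ : Set (ι → ℝ)) = ⋂ l ∈ {l : ι → ℤ | ∑ k, (l k : ℂ) * θ k = 0},
      (fun x => ∑ k, (l k : ℝ) * x k) ⁻¹' Set.range ((↑) : ℤ → ℝ) := by
    ext x
    simp [relationDual, eq_comm]
  rw [this]
  exact isClosed_biInter fun l _ =>
    Int.isClosedEmbedding_coe_real.isClosed_range.preimage (by fun_prop)

theorem kroneckerGroup_le_relationDual : kroneckerGroup θ ≤ relationDual θ := by
  rintro _ hy
  obtain ⟨X, m, rfl⟩ := (mem_kroneckerGroup θ).1 hy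
  intro l hl
  refine ⟨∑ k, l k * m k, ?_⟩
  simp only [Pi.add_apply, mul_add, Finset.sum_add_distrib, sum_mul_reMap_apply, hl, mul_zero,
    Complex.zero_re, zero_add]
  push_cast
  rfl

theorem closure_kroneckerGroup :
    closure (kroneckerGroup θ : Set (ι → ℝ)) = relationDual θ := by
  refine (closure_minimal (kroneckerGroup_le_relationDual θ) (isClosed_relationDual θ)).antisymm
    fun x hx => by_contra fun hxG => ?_
  classical
  obtain ⟨f, hfG, hfx⟩ := (kroneckerGroup θ).topologicalClosure.exists_dual_int_of_notMem
    (AddSubgroup.isClosed_topologicalClosure _) hxG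
  have hf : ∀ y ∈ kroneckerGroup θ, ∃ m : ℤ, f y = m := fun y hy => hfG y (subset_closure hy)
  choose l hl using fun k =>
    hf _ ((mem_kroneckerGroup θ).2 ⟨0, fun j => if k = j then 1 else 0, rfl⟩)
  have hf_apply : ∀ v, f v = ∑ k, (l k : ℝ) * v k := fun v => by
    rw [LinearMap.pi_apply_eq_sum_univ f v]
    refine Finset.sum_congr rfl fun k _ => ?_
    rw [← hl k, smul_eq_mul, mul_comm]
    simp
  have hfre : f ∘ₗ reMap θ = 0 := Module.Dual.eq_zero_of_forall_exists_intCast _ fun X =>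
    hf _ ((mem_kroneckerGroup θ).2 ⟨X, 0, by ext; simp⟩)
  have hrel : ∑ k, (l k : ℂ) * θ k = 0 := Complex.eq_zero_of_forall_re_mul_eq_zero fun X => by
    rw [← sum_mul_reMap_apply, ← hf_apply]
    exact congr($hfre X)
  obtain ⟨z, hz⟩ := hx l hrel
  exact hfx z (by rw [hf_apply, hz])

theorem infDist_kroneckerGroup_lt_iff (p : ι → ℝ) {r : ℝ} (hr : 0 < r) :
    infDist p (kroneckerGroup θ) < r ↔
      ∃ X : ℂ, ∀ k, ∃ m : ℤ, dist (p k) ((X * θ k).re + m) < r := by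
  rw [infDist_lt_iff ⟨0, zero_mem _⟩]
  constructor
  · rintro ⟨_, hy, h⟩
    obtain ⟨X, m, rfl⟩ := (mem_kroneckerGroup θ).1 hy
    exact ⟨X, fun k => ⟨m k, (dist_pi_lt_iff hr).1 h k⟩⟩
  · rintro ⟨X, h⟩
    choose m hm using h
    exact ⟨_, (mem_kroneckerGroup θ).2 ⟨X, m, rfl⟩, (dist_pi_lt_iff hr).2 hm⟩

end Kronecker

theorem stmt_17_general (n : ℕ) (θ : Fin n → ℂ)
    (E : Set (Fin n → ℝ))
    (hE : E = {x | ∀ l : Fin n → ℤ,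
      (∑ k : Fin n, (l k : ℂ) * θ k) = 0 → ∃ z : ℤ, ∑ k, (l k : ℝ) * x k = z})
    (δ : ℝ) (hδ : δ = Metric.infDist (fun _ => (1/2 : ℝ)) E)
    (ε : ℝ) (hε0 : 0 < ε) (hε1 : ε < 1/2) :
    (∃ X : ℂ, ∀ k : Fin n,
      Int.fract (X * θ k).re ∈ Set.Ioo ε (1 - ε)) ↔ ε < 1/2 - δ := by
  rw [hδ, show E = relationDual θ from hE, ← closure_kroneckerGroup, infDist_closure, lt_sub_comm,
    infDist_kroneckerGroup_lt_iff θ _ (by linarith)]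
  simp only [Int.fract_mem_Ioo_iff_exists_dist_lt hε0.le]

theorem stmt_17 (n : ℕ) (θ : Fin n → ℂ) (hθ : ∀ k, ‖θ k‖ = 1)
    (E : Set (Fin n → ℝ))
    (hE : E = {x | ∀ l : Fin n → ℤ,
      (∑ k : Fin n, (l k : ℂ) * θ k) = 0 → ∃ z : ℤ, ∑ k, (l k : ℝ) * x k = z})
    (δ : ℝ) (hδ : δ = Metric.infDist (fun _ => (1/2 : ℝ)) E)
    (ε : ℝ) (hε0 : 0 < ε) (hε1 : ε < 1/2) :
    (∃ X : ℂ, ∀ k : Fin n,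
      Int.fract (X * θ k).re ∈ Set.Ioo ε (1 - ε)) ↔ ε < 1/2 - δ :=
  stmt_17_general n θ E hE δ hδ ε hε0 hε1
end
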